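/- arXiv:2603.07000 — 4 statements merged into one kernel-verified Lean document; each statement's English description precedes it below -/
import Mathlib

section
/- Let U be an unrooted binary phylogenetic network on X, and let G be a subgraph of U isomorphic to the connection gadget (with ℓ and ℓ' being leaves of U). Suppose U has a tree-child orientation N such that the root of N does not subdivide an edge of G. Then either (i) (s,u) and (v,t) are arcs in N and u is not a reticulation, or (ii) (u,s) and (t,v) are arcs in N and v is not a reticulation. -/
/-- A graph with an explicit vertex set inside an ambient type `V`. -/
structure Net (V : Type) where
  verts : Set V
  graph : SimpleGraph V
  support : ∀ ⦃a b : V⦄, graph.Adj a b → a ∈ verts ∧ b ∈ verts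

namespace Net

variable {V : Type}

/-- The degree of a vertex. -/
noncomputable def deg (N : Net V) (v : V) : ℕ := (N.graph.neighborSet v).ncard

/-- `N` is connected (as a graph on its vertex set `N.verts`). -/
def ConnectedOn (N : Net V) : Prop :=
  N.verts.Nonempty ∧ ∀ a ∈ N.verts, ∀ b ∈ N.verts, N.graph.Reachable a b

/-- The set of leaves (degree-1 vertices). -/
def leaves (N : Net V) : Set V := {v | v ∈ N.verts ∧ N.deg v = 1}

/-- `N` is an unrooted binary phylogenetic network on the (label) set `X`:
it is simple (automatic for `SimpleGraph`), connected, every vertex has degree 1 or 3,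
and the degree-1 vertices are exactly the elements of `X` (we identify each leaf with
its label). -/
def IsUBPN (N : Net V) (X : Set V) : Prop :=
  N.ConnectedOn ∧ (∀ v ∈ N.verts, N.deg v = 1 ∨ N.deg v = 3) ∧ N.leaves = X

/-- Deleting a set of edges. -/
def deleteEdges (N : Net V) (D : Set (Sym2 V)) : Net V where
  verts := N.verts
  graph := N.graph.deleteEdges D
  support := fun _ _ h => N.support ((SimpleGraph.deleteEdges_adj.mp h).1)

/-- A cut-edge: an edge whose deletion disconnects the network. -/
def IsCutEdge (N : Net V) (e : Sym2 V) : Prop :=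
  e ∈ N.graph.edgeSet ∧ ¬ (N.deleteEdges {e}).ConnectedOn

/-- `N` is `q`-cuttable: every cycle contains a path of at least `q` vertices
each of which is incident to a cut-edge. -/
def QCuttable (N : Net V) (q : ℕ) : Prop :=
  ∀ ⦃r : V⦄ (C : N.graph.Walk r r), C.IsCycle →
    ∃ (x y : V) (P : N.graph.Walk x y), P.IsPath ∧ q ≤ P.support.length ∧
      (∀ v ∈ P.support, v ∈ C.support) ∧ (∀ e ∈ P.edges, e ∈ C.edges) ∧
      ∀ v ∈ P.support, ∃ e, N.IsCutEdge e ∧ v ∈ e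

end Net

/-- In-degree of a vertex in the digraph with arc relation `A`. -/
noncomputable def inDeg {W : Type} (A : W → W → Prop) (v : W) : ℕ := {u | A u v}.ncard

/-- Out-degree of a vertex in the digraph with arc relation `A`. -/
noncomputable def outDeg {W : Type} (A : W → W → Prop) (v : W) : ℕ := {u | A v u}.ncard

/-- `v` is a reticulation: in-degree 2. -/
def IsRet {W : Type} (A : W → W → Prop) (v : W) : Prop := inDeg A v = 2

/-- `v` is a tree vertex: in-degree 1 and out-degree 2. -/
def IsTreeVertex {W : Type} (A : W → W → Prop) (v : W) : Prop :=
  inDeg A v = 1 ∧ outDeg A v = 2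

/-- `v` is a leaf: in-degree 1 and out-degree 0. -/
def IsDLeaf {W : Type} (A : W → W → Prop) (v : W) : Prop :=
  inDeg A v = 1 ∧ outDeg A v = 0

/-- The arc relation `A`, with vertex set `S` and root `ρ`, forms a rooted binary
phylogenetic network. -/
def IsRBPN {W : Type} (A : W → W → Prop) (S : Set W) (ρ : W) : Prop :=
  (∀ ⦃a b : W⦄, A a b → a ∈ S ∧ b ∈ S) ∧
  (∀ v : W, ¬ Relation.TransGen A v v) ∧
  ρ ∈ S ∧ inDeg A ρ = 0 ∧ outDeg A ρ = 2 ∧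
  (∀ v ∈ S, v ≠ ρ → IsDLeaf A v ∨ IsTreeVertex A v ∨ IsRet A v) ∧
  (∀ v ∈ S, inDeg A v = 0 → v = ρ)

/-- Tree-child: every non-leaf vertex has a child that is not a reticulation. -/
def TreeChild {W : Type} (A : W → W → Prop) (S : Set W) : Prop :=
  ∀ v ∈ S, ¬ IsDLeaf A v → ∃ w, A v w ∧ ¬ IsRet A w

/-- Adjacency in the graph obtained from `U` by subdividing the edge `{a, b}` with a new
vertex `none : Option V`. -/
def SubdivAdj {V : Type} (U : Net V) (a b : V) (p q : Option V) : Prop :=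
  (∃ x y : V, p = some x ∧ q = some y ∧ U.graph.Adj x y ∧ s(x, y) ≠ s(a, b)) ∨
  (p = none ∧ (q = some a ∨ q = some b)) ∨
  (q = none ∧ (p = some a ∨ p = some b))

/-- The vertex set of an orientation of `U`: the vertices of `U` together with the new
root vertex `none`. -/
def OVerts {V : Type} (U : Net V) : Set (Option V) := insert none (some '' U.verts)

/-- The arc relation `A` on `Option V` is an orientation of `U` obtained by subdividing the
edge `{a, b}` of `U` with the new root vertex `none` and directing every edge of the
resulting graph. -/
def IsOrientationAt {V : Type} (U : Net V) (A : Option V → Option V → Prop) (a b : V) :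
    Prop :=
  U.graph.Adj a b ∧ (∀ p q, ¬ (A p q ∧ A q p)) ∧
  (∀ p q, (A p q ∨ A q p) ↔ SubdivAdj U a b p q)

/-- `A` is a tree-child orientation of `U` subdividing the edge `{a, b}`: it is an
orientation of `U` that is a rooted binary phylogenetic network with root `none` and is
tree-child. -/
def IsTreeChildOrientationAt {V : Type} (U : Net V) (A : Option V → Option V → Prop)
    (a b : V) : Prop :=
  IsOrientationAt U A a b ∧ IsRBPN A (OVerts U) none ∧ TreeChild A (OVerts U)

open Net

section GadgetHelpers

set_option linter.unusedSectionVars false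

variable {V : Type} [Fintype V]

lemma ncard_triple {α : Type*} {p q r : α} (hpq : p ≠ q) (hpr : p ≠ r) (hqr : q ≠ r) :
    ({p, q, r} : Set α).ncard = 3 := by
  rw [Set.ncard_insert_of_notMem (by simp [hpq, hpr]) (Set.toFinite _),
      Set.ncard_insert_of_notMem (by simp [hqr]) (Set.toFinite _), Set.ncard_singleton]

lemma ns_three (U : Net V) {X : Set V} (hU : U.IsUBPN X) {x p q r : V}
    (hp : U.graph.Adj x p) (hq : U.graph.Adj x q) (hr : U.graph.Adj x r)
    (hpq : p ≠ q) (hpr : p ≠ r) (hqr : q ≠ r) :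
    U.graph.neighborSet x = {p, q, r} := by
  have hx : x ∈ U.verts := (U.support hp).1
  have hsub : ({p, q, r} : Set V) ⊆ U.graph.neighborSet x := by
    intro z hz
    simp only [Set.mem_insert_iff, Set.mem_singleton_iff] at hz
    rcases hz with rfl | rfl | rfl <;> assumption
  have h3 : ({p, q, r} : Set V).ncard = 3 := ncard_triple hpq hpr hqr
  have hle : 3 ≤ U.deg x := by
    rw [← h3]; exact Set.ncard_le_ncard hsub (Set.toFinite _)
  rcases hU.2.1 x hx with h1 | h1
  · have h1' : (U.graph.neighborSet x).ncard = 1 := h1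
    have hle' : 3 ≤ (U.graph.neighborSet x).ncard := hle
    omega
  · have h1' : (U.graph.neighborSet x).ncard = 3 := h1
    exact (Set.eq_of_subset_of_ncard_le hsub (le_of_eq (by rw [h3, h1']))
      (Set.toFinite _)).symm

lemma ns_one (U : Net V) {X : Set V} (hU : U.IsUBPN X) {x p : V} (hx : x ∈ X)
    (hp : U.graph.Adj x p) : U.graph.neighborSet x = {p} := by
  have hx' : x ∈ U.leaves := by rw [hU.2.2]; exact hx
  have hd : U.deg x = 1 := hx'.2
  obtain ⟨c, hc⟩ := Set.ncard_eq_one.mp hd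
  have hmem : p ∈ U.graph.neighborSet x := hp
  rw [hc] at hmem ⊢
  simp only [Set.mem_singleton_iff] at hmem
  rw [hmem]

lemma arcs_mem {U : Net V} {A : Option V → Option V → Prop} {a b : V}
    (hiff : ∀ p q, (A p q ∨ A q p) ↔ SubdivAdj U a b p q)
    {x : V} (hxa : x ≠ a) (hxb : x ≠ b) {z : Option V}
    (hz : A z (some x) ∨ A (some x) z) : ∃ y, z = some y ∧ U.graph.Adj x y := by
  cases hz with
  | inl h =>
    rcases (hiff z (some x)).mp (Or.inl h) with
      ⟨x', y', hx', hy', hadj, -⟩ | ⟨-, (hq | hq)⟩ | ⟨hq, -⟩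
    · obtain rfl : x = y' := by injection hy'
      exact ⟨x', hx', hadj.symm⟩
    · exact absurd (by injection hq) hxa
    · exact absurd (by injection hq) hxb
    · exact absurd hq (by simp)
  | inr h =>
    rcases (hiff (some x) z).mp (Or.inl h) with
      ⟨x', y', hx', hy', hadj, -⟩ | ⟨hq, -⟩ | ⟨-, (hq | hq)⟩
    · obtain rfl : x = x' := by injection hx'
      exact ⟨y', hy', hadj⟩
    · exact absurd hq (by simp)
    · exact absurd (by injection hq) hxa
    · exact absurd (by injection hq) hxb

lemma ne_ab {U : Net V} {a b x : V} (hab : U.graph.Adj a b)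
    (h : ∀ y, U.graph.Adj x y → s(x, y) ≠ s(a, b)) : x ≠ a ∧ x ≠ b := by
  constructor
  · rintro rfl; exact h b hab rfl
  · rintro rfl; exact h a hab.symm Sym2.eq_swap

lemma not_dleaf {W : Type} [Fintype W] {A : W → W → Prop} {x z : W} (h : A x z) :
    ¬ IsDLeaf A x := by
  rintro ⟨-, h0⟩
  rw [outDeg, Set.ncard_eq_zero (Set.toFinite _)] at h0
  have : z ∈ {y | A x y} := h
  rw [h0] at this
  exact this

end GadgetHelpers

set_option linter.unusedSectionVars false in
lemma gadget_aux {V : Type} [Fintype V]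
    (U : Net V) (X : Set V) (hU : U.IsUBPN X)
    (s t u v w w' ℓ ℓ' : V)
    (hsv : s ≠ v) (hsw : s ≠ w) (hvw : v ≠ w)
    (hut : u ≠ t) (huw' : u ≠ w') (htw' : t ≠ w')
    (hul : u ≠ ℓ) (hw'l : w' ≠ ℓ) (hvl' : v ≠ ℓ') (hwl' : w ≠ ℓ')
    (e1 : U.graph.Adj s u) (e2 : U.graph.Adj u v) (e3 : U.graph.Adj v t)
    (e4 : U.graph.Adj u w) (e5 : U.graph.Adj v w') (e6 : U.graph.Adj w w')
    (e7 : U.graph.Adj w ℓ) (e8 : U.graph.Adj w' ℓ')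
    (hℓ : ℓ ∈ X) (hℓ' : ℓ' ∈ X)
    (a b : V) (A : Option V → Option V → Prop)
    (hor : IsTreeChildOrientationAt U A a b)
    (hr1 : s(s, u) ≠ s(a, b)) (hr2 : s(u, v) ≠ s(a, b)) (hr3 : s(v, t) ≠ s(a, b))
    (hr4 : s(u, w) ≠ s(a, b)) (hr5 : s(v, w') ≠ s(a, b)) (hr6 : s(w, w') ≠ s(a, b))
    (hr7 : s(w, ℓ) ≠ s(a, b)) (hr8 : s(w', ℓ') ≠ s(a, b))
    (hdir : A (some w) (some w')) :
    (A (some s) (some u) ∧ A (some v) (some t) ∧ ¬ IsRet A (some u)) ∨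
    (A (some u) (some s) ∧ A (some t) (some v) ∧ ¬ IsRet A (some v)) := by
  obtain ⟨⟨hab, hone, hiff⟩, hR, hTC⟩ := hor
  obtain ⟨hsupp, hacyc, hρ, hinρ, houtρ, hdeg, hin0⟩ := hR
  -- vertex memberships
  have hu_mem : u ∈ U.verts := (U.support e2).1
  have hv_mem : v ∈ U.verts := (U.support e2).2
  have hw_mem : w ∈ U.verts := (U.support e6).1
  have hw'_mem : w' ∈ U.verts := (U.support e6).2
  have hl_mem : ℓ ∈ U.verts := (U.support e7).2
  have hl'_mem : ℓ' ∈ U.verts := (U.support e8).2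
  have memO : ∀ x : V, x ∈ U.verts → (some x : Option V) ∈ OVerts U :=
    fun x hx => Set.mem_insert_of_mem _ ⟨x, hx, rfl⟩
  -- neighbor sets
  have nsu : U.graph.neighborSet u = {s, v, w} := ns_three U hU e1.symm e2 e4 hsv hsw hvw
  have nsv : U.graph.neighborSet v = {u, t, w'} := ns_three U hU e2.symm e3 e5 hut huw' htw'
  have nsw : U.graph.neighborSet w = {u, w', ℓ} := ns_three U hU e4.symm e6 e7 huw' hul hw'l
  have nsw' : U.graph.neighborSet w' = {v, w, ℓ'} :=
    ns_three U hU e5.symm e6.symm e8 hvw hvl' hwl'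
  have nsl : U.graph.neighborSet ℓ = {w} := ns_one U hU hℓ e7.symm
  have nsl' : U.graph.neighborSet ℓ' = {w'} := ns_one U hU hℓ' e8.symm
  -- vertices distinct from a, b
  have hu_ab : u ≠ a ∧ u ≠ b := ne_ab hab (by
    intro y hy
    have hy' : y ∈ ({s, v, w} : Set V) := nsu ▸ hy
    simp only [Set.mem_insert_iff, Set.mem_singleton_iff] at hy'
    rcases hy' with rfl | rfl | rfl
    · rw [Sym2.eq_swap]; exact hr1
    · exact hr2
    · exact hr4)
  have hv_ab : v ≠ a ∧ v ≠ b := ne_ab hab (by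
    intro y hy
    have hy' : y ∈ ({u, t, w'} : Set V) := nsv ▸ hy
    simp only [Set.mem_insert_iff, Set.mem_singleton_iff] at hy'
    rcases hy' with rfl | rfl | rfl
    · rw [Sym2.eq_swap]; exact hr2
    · exact hr3
    · exact hr5)
  have hw_ab : w ≠ a ∧ w ≠ b := ne_ab hab (by
    intro y hy
    have hy' : y ∈ ({u, w', ℓ} : Set V) := nsw ▸ hy
    simp only [Set.mem_insert_iff, Set.mem_singleton_iff] at hy'
    rcases hy' with rfl | rfl | rfl
    · rw [Sym2.eq_swap]; exact hr4
    · exact hr6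
    · exact hr7)
  have hw'_ab : w' ≠ a ∧ w' ≠ b := ne_ab hab (by
    intro y hy
    have hy' : y ∈ ({v, w, ℓ'} : Set V) := nsw' ▸ hy
    simp only [Set.mem_insert_iff, Set.mem_singleton_iff] at hy'
    rcases hy' with rfl | rfl | rfl
    · rw [Sym2.eq_swap]; exact hr5
    · rw [Sym2.eq_swap]; exact hr6
    · exact hr8)
  have hl_ab : ℓ ≠ a ∧ ℓ ≠ b := ne_ab hab (by
    intro y hy
    have hy' : y ∈ ({w} : Set V) := nsl ▸ hy
    simp only [Set.mem_singleton_iff] at hy'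
    subst hy'
    rw [Sym2.eq_swap]; exact hr7)
  have hl'_ab : ℓ' ≠ a ∧ ℓ' ≠ b := ne_ab hab (by
    intro y hy
    have hy' : y ∈ ({w'} : Set V) := nsl' ▸ hy
    simp only [Set.mem_singleton_iff] at hy'
    subst hy'
    rw [Sym2.eq_swap]; exact hr8)
  -- arc classification
  have arcu : ∀ z, (A z (some u) ∨ A (some u) z) →
      z = some s ∨ z = some v ∨ z = some w := by
    intro z hz
    obtain ⟨y, rfl, hy⟩ := arcs_mem hiff hu_ab.1 hu_ab.2 hz
    have hy' : y ∈ ({s, v, w} : Set V) := nsu ▸ hy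
    simp only [Set.mem_insert_iff, Set.mem_singleton_iff] at hy'
    rcases hy' with rfl | rfl | rfl <;> simp
  have arcv : ∀ z, (A z (some v) ∨ A (some v) z) →
      z = some u ∨ z = some t ∨ z = some w' := by
    intro z hz
    obtain ⟨y, rfl, hy⟩ := arcs_mem hiff hv_ab.1 hv_ab.2 hz
    have hy' : y ∈ ({u, t, w'} : Set V) := nsv ▸ hy
    simp only [Set.mem_insert_iff, Set.mem_singleton_iff] at hy'
    rcases hy' with rfl | rfl | rfl <;> simp
  have arcw : ∀ z, (A z (some w) ∨ A (some w) z) →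
      z = some u ∨ z = some w' ∨ z = some ℓ := by
    intro z hz
    obtain ⟨y, rfl, hy⟩ := arcs_mem hiff hw_ab.1 hw_ab.2 hz
    have hy' : y ∈ ({u, w', ℓ} : Set V) := nsw ▸ hy
    simp only [Set.mem_insert_iff, Set.mem_singleton_iff] at hy'
    rcases hy' with rfl | rfl | rfl <;> simp
  have arcw' : ∀ z, (A z (some w') ∨ A (some w') z) →
      z = some v ∨ z = some w ∨ z = some ℓ' := by
    intro z hz
    obtain ⟨y, rfl, hy⟩ := arcs_mem hiff hw'_ab.1 hw'_ab.2 hz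
    have hy' : y ∈ ({v, w, ℓ'} : Set V) := nsw' ▸ hy
    simp only [Set.mem_insert_iff, Set.mem_singleton_iff] at hy'
    rcases hy' with rfl | rfl | rfl <;> simp
  have arcl : ∀ z, (A z (some ℓ) ∨ A (some ℓ) z) → z = some w := by
    intro z hz
    obtain ⟨y, rfl, hy⟩ := arcs_mem hiff hl_ab.1 hl_ab.2 hz
    have hy' : y ∈ ({w} : Set V) := nsl ▸ hy
    simp only [Set.mem_singleton_iff] at hy'
    rw [hy']
  have arcl' : ∀ z, (A z (some ℓ') ∨ A (some ℓ') z) → z = some w' := by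
    intro z hz
    obtain ⟨y, rfl, hy⟩ := arcs_mem hiff hl'_ab.1 hl'_ab.2 hz
    have hy' : y ∈ ({w'} : Set V) := nsl' ▸ hy
    simp only [Set.mem_singleton_iff] at hy'
    rw [hy']
  -- edge dichotomies
  have d_su : A (some s) (some u) ∨ A (some u) (some s) :=
    (hiff _ _).mpr (Or.inl ⟨s, u, rfl, rfl, e1, hr1⟩)
  have d_uv : A (some u) (some v) ∨ A (some v) (some u) :=
    (hiff _ _).mpr (Or.inl ⟨u, v, rfl, rfl, e2, hr2⟩)
  have d_vt : A (some v) (some t) ∨ A (some t) (some v) :=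
    (hiff _ _).mpr (Or.inl ⟨v, t, rfl, rfl, e3, hr3⟩)
  have d_uw : A (some u) (some w) ∨ A (some w) (some u) :=
    (hiff _ _).mpr (Or.inl ⟨u, w, rfl, rfl, e4, hr4⟩)
  have d_vw' : A (some v) (some w') ∨ A (some w') (some v) :=
    (hiff _ _).mpr (Or.inl ⟨v, w', rfl, rfl, e5, hr5⟩)
  have d_wl : A (some w) (some ℓ) ∨ A (some ℓ) (some w) :=
    (hiff _ _).mpr (Or.inl ⟨w, ℓ, rfl, rfl, e7, hr7⟩)
  have d_w'l' : A (some w') (some ℓ') ∨ A (some ℓ') (some w') :=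
    (hiff _ _).mpr (Or.inl ⟨w', ℓ', rfl, rfl, e8, hr8⟩)
  -- a vertex of U with empty in-set would be the root: contradiction
  have root_ne : ∀ x : V, x ∈ U.verts → {z | A z (some x)} = ∅ → False := by
    intro x hx h
    have h0 : inDeg A (some x) = 0 := by rw [inDeg, h, Set.ncard_empty]
    have := hin0 (some x) (memO x hx) h0
    simp at this
  -- classification of in-degrees
  have hdeg' : ∀ x : V, x ∈ U.verts → inDeg A (some x) = 1 ∨ inDeg A (some x) = 2 := by
    intro x hx
    rcases hdeg (some x) (memO x hx) (by simp) with h | h | h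
    · exact Or.inl h.1
    · exact Or.inl h.1
    · exact Or.inr h
  -- leaf edges point to the leaves
  have hwl : A (some w) (some ℓ) := by
    rcases d_wl with h | h
    · exact h
    · exfalso
      apply root_ne ℓ hl_mem
      ext z
      simp only [Set.mem_setOf_eq, Set.mem_empty_iff_false, iff_false]
      intro hz
      have := arcl z (Or.inl hz)
      subst this
      exact hone _ _ ⟨hz, h⟩
  have hw'l' : A (some w') (some ℓ') := by
    rcases d_w'l' with h | h
    · exact h
    · exfalso
      apply root_ne ℓ' hl'_mem
      ext z
      simp only [Set.mem_setOf_eq, Set.mem_empty_iff_false, iff_false]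
      intro hz
      have := arcl' z (Or.inl hz)
      subst this
      exact hone _ _ ⟨hz, h⟩
  -- the edge u-w must point towards w
  have huw : A (some u) (some w) := by
    rcases d_uw with h | h
    · exact h
    · exfalso
      apply root_ne w hw_mem
      ext z
      simp only [Set.mem_setOf_eq, Set.mem_empty_iff_false, iff_false]
      intro hz
      rcases arcw z (Or.inl hz) with rfl | rfl | rfl
      · exact hone _ _ ⟨hz, h⟩
      · exact hone _ _ ⟨hz, hdir⟩
      · exact hone _ _ ⟨hz, hwl⟩
  -- case analysis on the edge u-v
  rcases d_uv with huv | hvu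
  · -- u → v : conclude the first disjunct
    have hvt : A (some v) (some t) := by
      rcases d_vt with h | htv
      · exact h
      · exfalso
        have hvw' : A (some v) (some w') := by
          rcases d_vw' with h | hw'v
          · exact h
          · exfalso
            have hin : {z | A z (some v)} = {some u, some t, some w'} := by
              ext z
              simp only [Set.mem_setOf_eq, Set.mem_insert_iff, Set.mem_singleton_iff]
              constructor
              · intro hz
                exact arcv z (Or.inl hz)
              · rintro (rfl | rfl | rfl)
                · exact huv
                · exact htv
                · exact hw'v
            have h3 : inDeg A (some v) = 3 := by
              rw [inDeg, hin]
              exact ncard_triple (by simp [hut]) (by simp [huw']) (by simp [htw'])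
            rcases hdeg' v hv_mem with h | h <;> omega
        -- w' is a reticulation
        have hretw' : IsRet A (some w') := by
          have hin : {z | A z (some w')} = {some v, some w} := by
            ext z
            simp only [Set.mem_setOf_eq, Set.mem_insert_iff, Set.mem_singleton_iff]
            constructor
            · intro hz
              rcases arcw' z (Or.inl hz) with rfl | rfl | rfl
              · exact Or.inl rfl
              · exact Or.inr rfl
              · exact absurd ⟨hz, hw'l'⟩ (hone _ _)
            · rintro (rfl | rfl)
              · exact hvw'
              · exact hdir
          rw [IsRet, inDeg, hin, Set.ncard_pair (by simp [hvw])]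
        -- tree-child at v fails: its only child is the reticulation w'
        obtain ⟨z, hz, hnr⟩ := hTC (some v) (memO v hv_mem) (not_dleaf hvw')
        rcases arcv z (Or.inr hz) with rfl | rfl | rfl
        · exact hone _ _ ⟨huv, hz⟩
        · exact hone _ _ ⟨htv, hz⟩
        · exact hnr hretw'
    have hsu : A (some s) (some u) := by
      rcases d_su with h | hus
      · exact h
      · exfalso
        apply root_ne u hu_mem
        ext z
        simp only [Set.mem_setOf_eq, Set.mem_empty_iff_false, iff_false]
        intro hz
        rcases arcu z (Or.inl hz) with rfl | rfl | rfl
        · exact hone _ _ ⟨hz, hus⟩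
        · exact hone _ _ ⟨hz, huv⟩
        · exact hone _ _ ⟨hz, huw⟩
    have hnru : ¬ IsRet A (some u) := by
      have hin : {z | A z (some u)} = {some s} := by
        ext z
        simp only [Set.mem_setOf_eq, Set.mem_singleton_iff]
        constructor
        · intro hz
          rcases arcu z (Or.inl hz) with rfl | rfl | rfl
          · rfl
          · exact absurd ⟨hz, huv⟩ (hone _ _)
          · exact absurd ⟨hz, huw⟩ (hone _ _)
        · rintro rfl
          exact hsu
      intro hr
      rw [IsRet, inDeg, hin, Set.ncard_singleton] at hr
      omega
    exact Or.inl ⟨hsu, hvt, hnru⟩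
  · -- v → u : conclude the second disjunct
    have hvw' : A (some v) (some w') := by
      rcases d_vw' with h | hw'v
      · exact h
      · exact absurd (Relation.TransGen.head huw (Relation.TransGen.head hdir
          (Relation.TransGen.head hw'v (Relation.TransGen.single hvu)))) (hacyc (some u))
    have hretw' : IsRet A (some w') := by
      have hin : {z | A z (some w')} = {some v, some w} := by
        ext z
        simp only [Set.mem_setOf_eq, Set.mem_insert_iff, Set.mem_singleton_iff]
        constructor
        · intro hz
          rcases arcw' z (Or.inl hz) with rfl | rfl | rfl
          · exact Or.inl rfl
          · exact Or.inr rfl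
          · exact absurd ⟨hz, hw'l'⟩ (hone _ _)
        · rintro (rfl | rfl)
          · exact hvw'
          · exact hdir
      rw [IsRet, inDeg, hin, Set.ncard_pair (by simp [hvw])]
    have htv : A (some t) (some v) := by
      rcases d_vt with hvt | h
      · exfalso
        apply root_ne v hv_mem
        ext z
        simp only [Set.mem_setOf_eq, Set.mem_empty_iff_false, iff_false]
        intro hz
        rcases arcv z (Or.inl hz) with rfl | rfl | rfl
        · exact hone _ _ ⟨hz, hvu⟩
        · exact hone _ _ ⟨hz, hvt⟩
        · exact hone _ _ ⟨hz, hvw'⟩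
      · exact h
    have hnrv : ¬ IsRet A (some v) := by
      have hin : {z | A z (some v)} = {some t} := by
        ext z
        simp only [Set.mem_setOf_eq, Set.mem_singleton_iff]
        constructor
        · intro hz
          rcases arcv z (Or.inl hz) with rfl | rfl | rfl
          · exact absurd ⟨hz, hvu⟩ (hone _ _)
          · rfl
          · exact absurd ⟨hz, hvw'⟩ (hone _ _)
        · rintro rfl
          exact htv
      intro hr
      rw [IsRet, inDeg, hin, Set.ncard_singleton] at hr
      omega
    -- tree-child at v: the non-reticulation child must be u
    obtain ⟨z, hz, hnr⟩ := hTC (some v) (memO v hv_mem) (not_dleaf hvu)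
    have hnru : ¬ IsRet A (some u) := by
      rcases arcv z (Or.inr hz) with rfl | rfl | rfl
      · exact hnr
      · exact absurd ⟨hz, htv⟩ (hone _ _)
      · exact absurd hretw' hnr
    have hus : A (some u) (some s) := by
      rcases d_su with hsu | h
      · exfalso
        apply hnru
        have hin : {z | A z (some u)} = {some s, some v} := by
          ext z
          simp only [Set.mem_setOf_eq, Set.mem_insert_iff, Set.mem_singleton_iff]
          constructor
          · intro hz'
            rcases arcu z (Or.inl hz') with rfl | rfl | rfl
            · exact Or.inl rfl
            · exact Or.inr rfl
            · exact absurd ⟨hz', huw⟩ (hone _ _)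
          · rintro (rfl | rfl)
            · exact hsu
            · exact hvu
        rw [IsRet, inDeg, hin, Set.ncard_pair (by simp [hsv])]
      · exact h
    exact Or.inr ⟨hus, htv, hnrv⟩

/-- Let `U` be an unrooted binary phylogenetic network on `X` and let `G`
be a subgraph of `U` isomorphic to the connection gadget, with vertices
`s, t, u, v, w, w', ℓ, ℓ'` and edges `{s,u}, {u,v}, {v,t}, {u,w}, {v,w'}, {w,w'}, {w,ℓ},
{w',ℓ'}`, where `ℓ` and `ℓ'` are leaves of `U`. Suppose `U` has a tree-child orientation
`A` (with root subdividing the edge `{a, b}` of `U`) whose root does not subdivide an edge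
of the gadget. Then either `(s,u)` and `(v,t)` are arcs and `u` is not a reticulation, or
`(u,s)` and `(t,v)` are arcs and `v` is not a reticulation. -/
theorem connection_gadget_orientation {V : Type} [Fintype V]
    (U : Net V) (X : Set V) (hU : U.IsUBPN X)
    (s t u v w w' ℓ ℓ' : V)
    (hnd : ([s, t, u, v, w, w', ℓ, ℓ'] : List V).Nodup)
    (e1 : U.graph.Adj s u) (e2 : U.graph.Adj u v) (e3 : U.graph.Adj v t)
    (e4 : U.graph.Adj u w) (e5 : U.graph.Adj v w') (e6 : U.graph.Adj w w')
    (e7 : U.graph.Adj w ℓ) (e8 : U.graph.Adj w' ℓ')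
    (hℓ : ℓ ∈ X) (hℓ' : ℓ' ∈ X)
    (a b : V) (A : Option V → Option V → Prop)
    (hor : IsTreeChildOrientationAt U A a b)
    (hroot : s(a, b) ∉ ({s(s, u), s(u, v), s(v, t), s(u, w), s(v, w'), s(w, w'),
      s(w, ℓ), s(w', ℓ')} : Set (Sym2 V))) :
    (A (some s) (some u) ∧ A (some v) (some t) ∧ ¬ IsRet A (some u)) ∨
    (A (some u) (some s) ∧ A (some t) (some v) ∧ ¬ IsRet A (some v)) := by
  simp only [List.nodup_cons, List.mem_cons, List.mem_singleton, List.not_mem_nil,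
    or_false, List.nodup_nil, and_true, not_or] at hnd
  obtain ⟨⟨hst, hsu, hsv, hsw, hsw', hsl, hsl'⟩, ⟨htu, htv, htw, htw', htl, htl'⟩,
    ⟨huv, huw, huw', hul, hul'⟩, ⟨hvw, hvw', hvl, hvl'⟩, ⟨hww', hwl, hwl'⟩,
    ⟨hw'l, hw'l'⟩, hll'⟩ := hnd
  simp only [Set.mem_insert_iff, Set.mem_singleton_iff, not_or] at hroot
  obtain ⟨hq1, hq2, hq3, hq4, hq5, hq6, hq7, hq8⟩ := hroot
  have hr1 := Ne.symm hq1
  have hr2 := Ne.symm hq2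
  have hr3 := Ne.symm hq3
  have hr4 := Ne.symm hq4
  have hr5 := Ne.symm hq5
  have hr6 := Ne.symm hq6
  have hr7 := Ne.symm hq7
  have hr8 := Ne.symm hq8
  have d_ww' : A (some w) (some w') ∨ A (some w') (some w) :=
    (hor.1.2.2 _ _).mpr (Or.inl ⟨w, w', rfl, rfl, e6, hr6⟩)
  rcases d_ww' with h | h
  · exact gadget_aux U X hU s t u v w w' ℓ ℓ' hsv hsw hvw (Ne.symm htu) huw' htw'
      hul hw'l hvl' hwl' e1 e2 e3 e4 e5 e6 e7 e8 hℓ hℓ' a b A hor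
      hr1 hr2 hr3 hr4 hr5 hr6 hr7 hr8 h
  · have key := gadget_aux U X hU t s v u w' w ℓ' ℓ htu htw' huw' (Ne.symm hsv) hvw hsw
      hvl' hwl' hul hw'l e3.symm e2.symm e1.symm e5 e4 e6.symm e8 e7 hℓ' hℓ a b A hor
      (by rw [Sym2.eq_swap]; exact hr3) (by rw [Sym2.eq_swap]; exact hr2)
      (by rw [Sym2.eq_swap]; exact hr1) hr5 hr4 (by rw [Sym2.eq_swap]; exact hr6)
      hr8 hr7 h
    rcases key with ⟨h1, h2, h3⟩ | ⟨h1, h2, h3⟩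
    · exact Or.inr ⟨h2, h1, h3⟩
    · exact Or.inl ⟨h2, h1, h3⟩
end

section
/- Let U be an unrooted binary phylogenetic network on X, and let G be a subgraph of U isomorphic to the reticulation gadget (with ℓ and ℓ' being leaves of U). Suppose U has a tree-child orientation N such that the root of N does not subdivide an edge of G. Then (w,r), (w',r), (r,t), and (s,u) are arcs in N. -/
open Net

/-!
Every vertex of the gadget other than `ℓ, ℓ'` has degree three and, the root lying outside the
gadget, one or two parents. In the triangle `u v v'` the sink is a reticulation, so by tree-child
the middle vertex sends its outside arc away, to a non-reticulation; so does the sink, and the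
source receives its outside arc. If `v` were the source, `w` would have children `v` and `ℓ`, hence
parent `r`, while the non-reticulation `w'` with parent `v'` would have child `r`: this closes the
directed cycle `r w v v' w' r`, and symmetrically for `v'`. So `u` is the source, giving `(s, u)`;
the non-reticulations `w, w'` with parents `v, v'` point to `r`, which is then a reticulation whose
only child is `t`.
-/

section Orientation

variable {W : Type} {A : W → W → Prop} {S : Set W}

theorem two_le_inDeg [Finite W] {x p q : W} (hp : A p x) (hq : A q x) (hpq : p ≠ q) :
    2 ≤ inDeg A x :=
  (Set.one_lt_ncard_iff (Set.toFinite _)).mpr ⟨p, q, hp, hq, hpq⟩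

theorem exists_parent_of_inDeg_eq {x : W} (h : inDeg A x = 1 ∨ inDeg A x = 2) : ∃ p, A p x :=
  Set.nonempty_of_ncard_ne_zero (s := {p | A p x}) (by unfold inDeg at h; omega)

theorem TreeChild.not_isRet_of_siblings_isRet [Finite W] (htc : TreeChild A S) {x y : W} (hx : x ∈ S)
    (hxy : A x y) (h : ∀ z, A x z → z ≠ y → IsRet A z) : ¬IsRet A y := by
  have hleaf : ¬IsDLeaf A x := fun hl =>
    Set.eq_empty_iff_forall_notMem.mp ((Set.ncard_eq_zero (Set.toFinite _)).mp hl.2) y hxy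
  obtain ⟨c, hxc, hc⟩ := htc x hx hleaf
  by_cases hcy : c = y
  · exact hcy ▸ hc
  · exact absurd (h c hxc hcy) hc

theorem exists_source_of_triangle (hacyc : ∀ p, ¬Relation.TransGen A p p) {x y z : W}
    (hxy : A x y ∨ A y x) (hyz : A y z ∨ A z y) (hxz : A x z ∨ A z x) :
    (A x y ∧ A x z) ∨ (A y x ∧ A y z) ∨ (A z x ∧ A z y) := by
  have hxyz : ¬(A x y ∧ A y z ∧ A z x) := fun ⟨h₁, h₂, h₃⟩ =>
    hacyc x (.tail (.tail (.single h₁) h₂) h₃)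
  have hxzy : ¬(A x z ∧ A z y ∧ A y x) := fun ⟨h₁, h₂, h₃⟩ =>
    hacyc x (.tail (.tail (.single h₁) h₂) h₃)
  tauto

/-- `x` is a non-root vertex of degree three, with neighbours `n₁ n₂ n₃`, of the orientation `A`
on the vertex set `S`. -/
structure IsInner (A : W → W → Prop) (S : Set W) (x n₁ n₂ n₃ : W) : Prop where
  mem : x ∈ S
  inDeg_eq : inDeg A x = 1 ∨ inDeg A x = 2
  adj_iff : ∀ p, A p x ∨ A x p ↔ p = n₁ ∨ p = n₂ ∨ p = n₃
  ne₁₂ : n₁ ≠ n₂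
  ne₁₃ : n₁ ≠ n₃
  ne₂₃ : n₂ ≠ n₃

namespace IsInner

variable {x n₁ n₂ n₃ : W}

theorem swap₂₃ (hx : IsInner A S x n₁ n₂ n₃) : IsInner A S x n₁ n₃ n₂ where
  mem := hx.mem
  inDeg_eq := hx.inDeg_eq
  adj_iff p := (hx.adj_iff p).trans (by rw [or_comm (a := p = n₂)])
  ne₁₂ := hx.ne₁₃
  ne₁₃ := hx.ne₁₂
  ne₂₃ := hx.ne₂₃.symm

theorem adj₁ (hx : IsInner A S x n₁ n₂ n₃) : A n₁ x ∨ A x n₁ :=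
  (hx.adj_iff n₁).mpr (Or.inl rfl)

theorem child_eq (hx : IsInner A S x n₁ n₂ n₃) {p : W} (hp : A x p) :
    p = n₁ ∨ p = n₂ ∨ p = n₃ :=
  (hx.adj_iff p).mp (Or.inr hp)

theorem isRet_of_two_le_inDeg (hx : IsInner A S x n₁ n₂ n₃) (h : 2 ≤ inDeg A x) :
    IsRet A x := by
  rcases hx.inDeg_eq with h' | h' <;> [omega; exact h']

theorem not_three_parents [Finite W] (hx : IsInner A S x n₁ n₂ n₃) (h₁ : A n₁ x)
    (h₂ : A n₂ x) (h₃ : A n₃ x) : False := by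
  have : 2 < inDeg A x :=
    (Set.two_lt_ncard_iff (Set.toFinite _)).mpr ⟨_, _, _, h₁, h₂, h₃, hx.ne₁₂, hx.ne₁₃, hx.ne₂₃⟩
  rcases hx.inDeg_eq with h | h <;> omega

theorem not_three_children [Std.Asymm A] (hx : IsInner A S x n₁ n₂ n₃) (h₁ : A x n₁)
    (h₂ : A x n₂) (h₃ : A x n₃) : False := by
  obtain ⟨p, hp⟩ := exists_parent_of_inDeg_eq hx.inDeg_eq
  rcases (hx.adj_iff p).mp (Or.inl hp) with rfl | rfl | rfl
  exacts [asymm hp h₁, asymm hp h₂, asymm hp h₃]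

theorem arc_of_two_parents [Finite W] (hx : IsInner A S x n₁ n₂ n₃) (h₂ : A n₂ x)
    (h₃ : A n₃ x) : A x n₁ :=
  hx.adj₁.resolve_left fun h₁ => hx.not_three_parents h₁ h₂ h₃

theorem parent_of_two_children [Std.Asymm A] (hx : IsInner A S x n₁ n₂ n₃) (h₂ : A x n₂)
    (h₃ : A x n₃) : A n₁ x :=
  hx.adj₁.resolve_right fun h₁ => hx.not_three_children h₁ h₂ h₃

theorem isRet_of_two_parents [Finite W] (hx : IsInner A S x n₁ n₂ n₃) (h₂ : A n₂ x)
    (h₃ : A n₃ x) : IsRet A x :=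
  hx.isRet_of_two_le_inDeg (two_le_inDeg h₂ h₃ hx.ne₂₃)

theorem arc_of_not_isRet [Finite W] (hx : IsInner A S x n₁ n₂ n₃) (h₂ : A n₂ x)
    (hret : ¬IsRet A x) : A x n₁ :=
  hx.adj₁.resolve_left fun h₁ => hret (hx.isRet_of_two_le_inDeg (two_le_inDeg h₁ h₂ hx.ne₁₂))

variable [Finite W] [Std.Asymm A]

theorem not_isRet_of_two_parents (htc : TreeChild A S) (hx : IsInner A S x n₁ n₂ n₃)
    (h₂ : A n₂ x) (h₃ : A n₃ x) : ¬IsRet A n₁ :=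
  htc.not_isRet_of_siblings_isRet hx.mem (hx.arc_of_two_parents h₂ h₃) fun z hz hz₁ => by
    rcases hx.child_eq hz with rfl | rfl | rfl
    exacts [absurd rfl hz₁, (asymm hz h₂).elim, (asymm hz h₃).elim]

theorem arc_of_isRet_child (htc : TreeChild A S) (hx : IsInner A S x n₁ n₂ n₃)
    (h₂ : A n₂ x) (h₃ : A x n₃) (hret : IsRet A n₃) : A x n₁ :=
  hx.adj₁.resolve_left fun h₁ => htc.not_isRet_of_siblings_isRet hx.mem h₃ (fun z hz hz₃ => by
    rcases hx.child_eq hz with rfl | rfl | rfl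
    exacts [(asymm hz h₁).elim, (asymm hz h₂).elim, absurd rfl hz₃]) hret

theorem not_isRet_of_isRet_sibling (htc : TreeChild A S) (hx : IsInner A S x n₁ n₂ n₃)
    (h₁ : A x n₁) (h₃ : A x n₃) (hret : IsRet A n₃) : ¬IsRet A n₁ :=
  htc.not_isRet_of_siblings_isRet hx.mem h₁ fun z hz hz₁ => by
    rcases hx.child_eq hz with rfl | rfl | rfl
    exacts [absurd rfl hz₁, (hx.not_three_children h₁ hz h₃).elim, hret]

end IsInner

variable [Finite W] [Std.Asymm A] {x y z x' y' z' : W}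

theorem triangle_arcs_of_source_of_sink (htc : TreeChild A S) (hx : IsInner A S x x' y z)
    (hy : IsInner A S y y' x z) (hz : IsInner A S z z' x y) (hxy : A x y) (hxz : A x z)
    (hyz : A y z) : A x' x ∧ A y y' ∧ A z z' ∧ ¬IsRet A y' ∧ ¬IsRet A z' := by
  -- the sink `z` is a reticulation, so tree-child forces `y` to point away, to a non-reticulation
  have hzret := hz.isRet_of_two_parents hxz hyz
  have hyy' := hy.arc_of_isRet_child htc hxy hyz hzret
  exact ⟨hx.parent_of_two_children hxy hxz, hyy', hz.arc_of_two_parents hxz hyz,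
    hy.not_isRet_of_isRet_sibling htc hyy' hyz hzret, hz.not_isRet_of_two_parents htc hxz hyz⟩

theorem triangle_arcs_of_source (htc : TreeChild A S) (hx : IsInner A S x x' y z)
    (hy : IsInner A S y y' x z) (hz : IsInner A S z z' x y) (hxy : A x y) (hxz : A x z) :
    A x' x ∧ A y y' ∧ A z z' ∧ ¬IsRet A y' ∧ ¬IsRet A z' := by
  rcases hz.adj_iff y |>.mpr (Or.inr (Or.inr rfl)) with hyz | hzy
  · exact triangle_arcs_of_source_of_sink htc hx hy hz hxy hxz hyz
  · obtain ⟨hx'x, hzz', hyy', hz', hy'⟩ :=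
      triangle_arcs_of_source_of_sink htc hx.swap₂₃ hz hy hxz hxy hzy
    exact ⟨hx'x, hyy', hzz', hy', hz'⟩

variable {s t u v v' w w' r ℓ ℓ' : W}

theorem reticulation_gadget_arcs (hacyc : ∀ p, ¬Relation.TransGen A p p)
    (htc : TreeChild A S) (hu : IsInner A S u s v v') (hv : IsInner A S v w u v')
    (hv' : IsInner A S v' w' u v) (hw : IsInner A S w r v ℓ) (hw' : IsInner A S w' r v' ℓ')
    (hr : IsInner A S r t w w') (hwℓ : A w ℓ) (hw'ℓ' : A w' ℓ') :
    A w r ∧ A w' r ∧ A r t ∧ A s u := by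
  rcases exists_source_of_triangle hacyc (hv.adj_iff u |>.mpr (Or.inr (Or.inl rfl)))
    (hv'.adj_iff v |>.mpr (Or.inr (Or.inr rfl))) (hv'.adj_iff u |>.mpr (Or.inr (Or.inl rfl)))
    with ⟨huv, huv'⟩ | ⟨hvu, hvv'⟩ | ⟨hv'u, hv'v⟩
  · obtain ⟨hsu, hvw, hv'w', hw_ret, hw'_ret⟩ := triangle_arcs_of_source htc hu hv hv' huv huv'
    have hwr := hw.arc_of_not_isRet hvw hw_ret
    have hw'r := hw'.arc_of_not_isRet hv'w' hw'_ret
    exact ⟨hwr, hw'r, hr.arc_of_two_parents hwr hw'r, hsu⟩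
  · obtain ⟨hwv, -, hv'w', -, hw'_ret⟩ := triangle_arcs_of_source htc hv hu hv'.swap₂₃ hvu hvv'
    have hrw := hw.parent_of_two_children hwv hwℓ
    have hw'r := hw'.arc_of_not_isRet hv'w' hw'_ret
    exact (hacyc r (.tail (.tail (.tail (.tail (.single hrw) hwv) hvv') hv'w') hw'r)).elim
  · obtain ⟨hw'v', -, hvw, -, hw_ret⟩ :=
      triangle_arcs_of_source htc hv' hu.swap₂₃ hv.swap₂₃ hv'u hv'v
    have hrw' := hw'.parent_of_two_children hw'v' hw'ℓ'
    have hwr := hw.arc_of_not_isRet hvw hw_ret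
    exact (hacyc r (.tail (.tail (.tail (.tail (.single hrw') hw'v') hv'v) hvw) hwr)).elim

end Orientation

section UnrootedNetwork

variable {V : Type} {U : Net V} {X : Set V}

theorem Net.IsUBPN.neighborSet_eq_of_adj₃ [Finite V] (hU : U.IsUBPN X) {x n₁ n₂ n₃ : V}
    (h₁ : U.graph.Adj x n₁) (h₂ : U.graph.Adj x n₂) (h₃ : U.graph.Adj x n₃)
    (hnd : [n₁, n₂, n₃].Nodup) : U.graph.neighborSet x = {n₁, n₂, n₃} := by
  simp only [List.nodup_cons, List.mem_cons, List.not_mem_nil, not_or] at hnd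
  have hcard : ({n₁, n₂, n₃} : Set V).ncard = 3 :=
    Set.ncard_eq_three.mpr ⟨n₁, n₂, n₃, hnd.1.1, hnd.1.2.1, hnd.2.1.1, rfl⟩
  have hdeg : U.deg x ≤ 3 := by rcases hU.2.1 x (U.support h₁).1 with h | h <;> omega
  refine (Set.eq_of_subset_of_ncard_le ?_ (hcard ▸ hdeg) (Set.toFinite _)).symm
  rintro p (rfl | rfl | rfl) <;> assumption

theorem Net.IsUBPN.neighborSet_eq_singleton_of_mem [Finite V] (hU : U.IsUBPN X) {x ℓ : V}
    (h : U.graph.Adj ℓ x) (hℓ : ℓ ∈ X) : U.graph.neighborSet ℓ = {x} := by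
  have hdeg : U.deg ℓ = 1 := (hU.2.2 ▸ hℓ).2
  exact (Set.eq_of_subset_of_ncard_le (Set.singleton_subset_iff.mpr h)
    (by rw [Set.ncard_singleton, ← hdeg]; rfl) (Set.toFinite _)).symm

theorem IsRBPN.inDeg_eq_one_or_two {W : Type} {A : W → W → Prop} {S : Set W} {ρ v : W}
    (h : IsRBPN A S ρ) (hv : v ∈ S) (hvρ : v ≠ ρ) : inDeg A v = 1 ∨ inDeg A v = 2 := by
  obtain ⟨-, -, -, -, -, hclass, -⟩ := h
  rcases hclass v hv hvρ with h | h | h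
  exacts [Or.inl h.1, Or.inl h.1, Or.inr h]

variable {A : Option V → Option V → Prop} {a b : V}

theorem IsOrientationAt.adj_iff (hA : IsOrientationAt U A a b) {x : V}
    (hx : ∀ y, U.graph.Adj x y → s(x, y) ≠ s(a, b)) (p : Option V) :
    A p (some x) ∨ A (some x) p ↔ ∃ y, U.graph.Adj x y ∧ p = some y := by
  rw [hA.2.2]
  cases p with
  | none =>
    simp only [SubdivAdj, reduceCtorEq, Option.some.injEq, false_and, exists_false, or_false,
      true_and, false_or, and_false, iff_false, not_or]
    exact ⟨fun hxa => hx b (hxa ▸ hA.1) (hxa ▸ rfl),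
      fun hxb => hx a (hxb ▸ hA.1.symm) (hxb ▸ Sym2.eq_swap)⟩
  | some q =>
    simp only [SubdivAdj, reduceCtorEq, Option.some.injEq, false_and, or_false,
      exists_and_left, exists_eq_left', exists_eq_right', ne_eq]
    exact ⟨fun h => h.1.symm, fun h => ⟨h.symm, by rw [Sym2.eq_swap]; exact hx q h⟩⟩

theorem some_mem_oVerts {x : V} (hx : x ∈ U.verts) : some x ∈ OVerts U :=
  Set.mem_insert_of_mem _ ⟨x, hx, rfl⟩

theorem IsTreeChildOrientationAt.isInner [Finite V] (hA : IsTreeChildOrientationAt U A a b)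
    (hU : U.IsUBPN X) {x n₁ n₂ n₃ : V} (h₁ : U.graph.Adj x n₁) (h₂ : U.graph.Adj x n₂)
    (h₃ : U.graph.Adj x n₃) (hnd : [n₁, n₂, n₃].Nodup) {E : Set (Sym2 V)} (hroot : s(a, b) ∉ E)
    (hE : {s(x, n₁), s(x, n₂), s(x, n₃)} ⊆ E) :
    IsInner A (OVerts U) (some x) (some n₁) (some n₂) (some n₃) := by
  have hN := hU.neighborSet_eq_of_adj₃ h₁ h₂ h₃ hnd
  have hx : some x ∈ OVerts U := some_mem_oVerts (U.support h₁).1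
  have hxroot : ∀ y, U.graph.Adj x y → s(x, y) ≠ s(a, b) := by
    intro y hy hxy
    rw [← SimpleGraph.mem_neighborSet, hN] at hy
    exact hroot (hxy ▸ hE (by rcases hy with rfl | rfl | rfl <;> simp))
  simp only [List.nodup_cons, List.mem_cons, List.not_mem_nil, not_or] at hnd
  refine ⟨hx, hA.2.1.inDeg_eq_one_or_two hx (Option.some_ne_none x), fun p => ?_,
    (Option.some_injective V).ne hnd.1.1, (Option.some_injective V).ne hnd.1.2.1,
    (Option.some_injective V).ne hnd.2.1.1⟩
  simp only [hA.1.adj_iff hxroot, ← SimpleGraph.mem_neighborSet, hN, Set.mem_insert_iff,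
    Set.mem_singleton_iff, or_and_right, exists_or, exists_eq_left]

theorem IsTreeChildOrientationAt.arc_of_leaf [Finite V] (hA : IsTreeChildOrientationAt U A a b)
    (hU : U.IsUBPN X) {x ℓ : V} (h : U.graph.Adj x ℓ) (hℓ : ℓ ∈ X)
    {E : Set (Sym2 V)} (hroot : s(a, b) ∉ E) (hE : s(x, ℓ) ∈ E) : A (some x) (some ℓ) := by
  have hN := hU.neighborSet_eq_singleton_of_mem h.symm hℓ
  have hℓroot : ∀ y, U.graph.Adj ℓ y → s(ℓ, y) ≠ s(a, b) := by
    intro y hy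
    obtain rfl : y = x := by rwa [← SimpleGraph.mem_neighborSet, hN] at hy
    rw [Sym2.eq_swap]
    exact fun h => hroot (h ▸ hE)
  obtain ⟨p, hp⟩ := exists_parent_of_inDeg_eq <|
    hA.2.1.inDeg_eq_one_or_two (some_mem_oVerts (U.support h).2) (Option.some_ne_none ℓ)
  obtain ⟨y, hy, rfl⟩ := (hA.1.adj_iff hℓroot p).mp (Or.inl hp)
  obtain rfl : y = x := by rwa [← SimpleGraph.mem_neighborSet, hN] at hy
  exact hp

end UnrootedNetwork

/-- Let `U` be an unrooted binary phylogenetic network on `X` and let `G`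
be a subgraph of `U` isomorphic to the reticulation gadget, with vertices
`s, t, u, v, v', w, w', r, ℓ, ℓ'` and edges `{s,u}, {u,v}, {u,v'}, {v,v'}, {v,w}, {v',w'},
{w,r}, {w',r}, {w,ℓ}, {w',ℓ'}, {r,t}`, where `ℓ` and `ℓ'` are leaves of `U`. Suppose `U`
has a tree-child orientation `A` (with root subdividing the edge `{a, b}` of `U`) whose
root does not subdivide an edge of the gadget. Then `(w,r)`, `(w',r)`, `(r,t)`, and
`(s,u)` are arcs in the orientation. -/
theorem reticulation_gadget_orientation {V : Type} [Fintype V]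
    (U : Net V) (X : Set V) (hU : U.IsUBPN X)
    (s t u v v' w w' r ℓ ℓ' : V)
    (hnd : ([s, t, u, v, v', w, w', r, ℓ, ℓ'] : List V).Nodup)
    (e1 : U.graph.Adj s u) (e2 : U.graph.Adj u v) (e3 : U.graph.Adj u v')
    (e4 : U.graph.Adj v v') (e5 : U.graph.Adj v w) (e6 : U.graph.Adj v' w')
    (e7 : U.graph.Adj w r) (e8 : U.graph.Adj w' r)
    (e9 : U.graph.Adj w ℓ) (e10 : U.graph.Adj w' ℓ') (e11 : U.graph.Adj r t)
    (hℓ : ℓ ∈ X) (hℓ' : ℓ' ∈ X)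
    (a b : V) (A : Option V → Option V → Prop)
    (hor : IsTreeChildOrientationAt U A a b)
    (hroot : s(a, b) ∉ ({s(s, u), s(u, v), s(u, v'), s(v, v'), s(v, w), s(v', w'),
      s(w, r), s(w', r), s(w, ℓ), s(w', ℓ'), s(r, t)} : Set (Sym2 V))) :
    A (some w) (some r) ∧ A (some w') (some r) ∧ A (some r) (some t) ∧
      A (some s) (some u) := by
  have : Std.Asymm A := ⟨fun p q h h' => hor.1.2.1 p q ⟨h, h'⟩⟩
  exact reticulation_gadget_arcs hor.2.1.2.1 hor.2.2
    (hor.isInner hU e1.symm e2 e3 (by grind) hroot (by simp [Set.insert_subset_iff]))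
    (hor.isInner hU e5 e2.symm e4 (by grind) hroot (by simp [Set.insert_subset_iff]))
    (hor.isInner hU e6 e3.symm e4.symm (by grind) hroot (by simp [Set.insert_subset_iff]))
    (hor.isInner hU e7 e5.symm e9 (by grind) hroot (by simp [Set.insert_subset_iff]))
    (hor.isInner hU e8 e6.symm e10 (by grind) hroot (by simp [Set.insert_subset_iff]))
    (hor.isInner hU e11 e7.symm e8.symm (by grind) hroot (by simp [Set.insert_subset_iff]))
    (hor.arc_of_leaf hU e9 hℓ hroot (by simp)) (hor.arc_of_leaf hU e10 hℓ' hroot (by simp))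
end

section
/- Let U be a 2-cuttable unrooted binary phylogenetic network on X, and let e and e' be two distinct cut-edges of U. Then the X-splits induced by e and e' are distinct. -/
namespace Net

variable {V : Type}

/-- The edge `e` of `N` induces the `X`-split `X₁ | X₂`: `(X₁, X₂)` is a partition of `X`
into two nonempty parts and every path in `N` between a leaf in `X₁` and a leaf in `X₂`
passes through `e`. -/
def InducesSplit (N : Net V) (X : Set V) (e : Sym2 V) (X₁ X₂ : Set V) : Prop :=
  X₁.Nonempty ∧ X₂.Nonempty ∧ X₁ ∩ X₂ = ∅ ∧ X₁ ∪ X₂ = X ∧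
  ∀ x ∈ X₁, ∀ y ∈ X₂, ∀ P : N.graph.Walk x y, P.IsPath → e ∈ P.edges

end Net

open Net

/-! If distinct edges `e`, `e'` induced the same split `A | B`, fix a leaf `x ∈ A`: the vertices
reachable from `x` avoiding `e` but not avoiding `e'` (or the other way round) form a nonempty set
of internal, hence degree-3, vertices that is left only through `e` and `e'`, a *cubic pocket*.
Counting degrees, a cubic pocket spans at least as many edges as vertices, so it contains a cycle,
and 2-cuttability gives adjacent vertices `u`, `v` on it that lie on bridges. A bridge with both
ends in the pocket cuts off a smaller pocket; otherwise the bridges at `u` and `v` are the two edges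
leaving the pocket, and removing `u` and `v` leaves a smaller pocket. So there is no pocket. -/

namespace SimpleGraph

variable {V : Type*} {G : SimpleGraph V}

lemma IsAcyclic.card_edgeSet_lt [Finite V] [Nonempty V] (h : G.IsAcyclic) :
    Nat.card G.edgeSet < Nat.card V := by
  obtain ⟨T, hGT, -, hT⟩ := connected_top.exists_isTree_le_of_le_of_isAcyclic le_top h
  have hcard := (isTree_iff_connected_and_card.mp hT).2
  have := Nat.card_mono (Set.toFinite T.edgeSet) (edgeSet_mono hGT)
  omega

lemma Reachable.deleteEdges_or {a b w : V} (h : G.Reachable w a) :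
    (G.deleteEdges {s(a, b)}).Reachable w a ∨ (G.deleteEdges {s(a, b)}).Reachable w b := by
  obtain ⟨p⟩ := h
  induction p with
  | nil => exact .inl .rfl
  | @cons w v a hwv p ih =>
    by_cases hab : s(w, v) = s(a, b)
    · rcases Sym2.eq_iff.mp hab with ⟨rfl, -⟩ | ⟨rfl, -⟩
      · exact .inl .rfl
      · exact .inr .rfl
    · have hstep : (G.deleteEdges {s(a, b)}).Adj w v := deleteEdges_adj.mpr ⟨hwv, hab⟩
      exact ih.imp hstep.reachable.trans hstep.reachable.trans

lemma reachable_deleteEdges_of_not_reachable {e : Sym2 V} {x y z : V}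
    (hxy : G.Reachable x y) (hxz : G.Reachable x z)
    (hnxy : ¬ (G.deleteEdges {e}).Reachable x y) (hnyz : ¬ (G.deleteEdges {e}).Reachable y z) :
    (G.deleteEdges {e}).Reachable x z := by
  classical
  obtain ⟨p⟩ := hxy
  have hep := p.mem_edges_of_not_reachable_deleteEdges hnxy
  cases e with | h a b =>
  have hxa : G.Reachable x a := ⟨p.takeUntil a (p.fst_mem_support_of_mem_edges hep)⟩
  rcases hxa.deleteEdges_or (b := b) with hx | hx <;>
  rcases (p.reverse.reachable.trans hxa).deleteEdges_or (b := b) with hy | hy <;>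
  rcases (hxz.symm.trans hxa).deleteEdges_or (b := b) with hz | hz <;>
  first
  | exact hx.trans hz.symm
  | exact absurd (hx.trans hy.symm) hnxy
  | exact absurd (hy.trans hz.symm) hnyz

lemma edge_eq_of_reachable_of_not_reachable {e : Sym2 V} {x z y : V}
    (hz : (G.deleteEdges {e}).Reachable x z) (hy : ¬ (G.deleteEdges {e}).Reachable x y)
    (hzy : G.Adj z y) : s(z, y) = e := by
  by_contra hne
  exact hy (hz.trans (deleteEdges_adj.mpr ⟨hzy, hne⟩).reachable)

lemma exists_third_neighbor {z a b : V} (hz : (G.neighborSet z).ncard = 3)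
    (ha : G.Adj z a) (hb : G.Adj z b) (hab : a ≠ b) :
    ∃ t, G.Adj z t ∧ t ≠ a ∧ t ≠ b ∧ ∀ y, G.Adj z y → y = a ∨ y = b ∨ y = t := by
  have hone : (G.neighborSet z \ {a, b}).ncard = 1 := by
    have hsub : ({a, b} : Set V) ⊆ G.neighborSet z := by simp [Set.insert_subset_iff, ha, hb]
    rw [Set.ncard_sdiff hsub, hz, Set.ncard_pair hab]
  obtain ⟨t, ht⟩ := Set.ncard_eq_one.mp hone
  have htmem : t ∈ G.neighborSet z \ {a, b} := ht ▸ rfl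
  simp only [Set.mem_sdiff, mem_neighborSet, Set.mem_insert_iff, Set.mem_singleton_iff,
    not_or] at htmem
  refine ⟨t, htmem.1, htmem.2.1, htmem.2.2, fun y hy => ?_⟩
  by_contra hyt
  simp only [not_or] at hyt
  have : y ∈ G.neighborSet z \ {a, b} := by simp [hy, hyt.1, hyt.2.1]
  rw [ht] at this
  exact hyt.2.2 this

lemma exists_adj_of_not_reachable_deleteEdges {e : Sym2 V} {x y : V} (hxy : G.Reachable x y)
    (hn : ¬ (G.deleteEdges {e}).Reachable x y) :
    ∃ a b, G.Adj a b ∧ s(a, b) = e ∧ (G.deleteEdges {e}).Reachable x a ∧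
      ¬ (G.deleteEdges {e}).Reachable x b := by
  obtain ⟨p⟩ := hxy
  obtain ⟨d, -, hd₁, hd₂⟩ :=
    p.exists_boundary_dart {z | (G.deleteEdges {e}).Reachable x z} Reachable.rfl hn
  exact ⟨d.fst, d.snd, d.adj, edge_eq_of_reachable_of_not_reachable hd₁ hd₂ d.adj, hd₁, hd₂⟩

def IsCubicPocket (G : SimpleGraph V) (K : Set V) (e₁ e₂ : Sym2 V) : Prop :=
  K.Nonempty ∧ (∀ z ∈ K, (G.neighborSet z).ncard = 3) ∧
    ∀ z ∈ K, ∀ y ∉ K, G.Adj z y → s(z, y) = e₁ ∨ s(z, y) = e₂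

namespace IsCubicPocket

variable {K : Set V} {e₁ e₂ : Sym2 V}

open Finset in
lemma card_le_card_edgeSet_induce [Fintype V] (hK : G.IsCubicPocket K e₁ e₂) :
    Nat.card K ≤ Nat.card (G.induce K).edgeSet := by
  classical
  obtain ⟨-, hdeg, hbd⟩ := hK
  set H := G.induce K
  let out : K → Finset V := fun z => {y | y ∉ K ∧ G.Adj z y}
  have hvert : ∀ z : K, 3 ≤ H.degree z + #(out z) := by
    intro z
    have hsub : G.neighborFinset z ⊆
        (H.neighborFinset z).map (Function.Embedding.subtype _) ∪ out z := by
      intro y hy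
      rw [mem_neighborFinset] at hy
      by_cases hyK : y ∈ K
      · exact mem_union_left _ (mem_map.mpr ⟨⟨y, hyK⟩, by simpa [H] using hy, rfl⟩)
      · exact mem_union_right _ (by simp [out, hyK, hy])
    calc 3 = #(G.neighborFinset z) := by
          rw [← hdeg z z.2, ← Set.ncard_coe_finset, coe_neighborFinset]
      _ ≤ _ := (card_le_card hsub).trans (card_union_le _ _)
      _ = _ := by rw [card_map, card_neighborFinset_eq_degree]
  have hout : ∑ z : K, #(out z) ≤ 2 := by
    rw [← card_sigma]
    refine (card_le_card_of_injOn (fun p => s(p.1.1, p.2)) (t := {e₁, e₂}) ?_ ?_).trans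
      card_le_two
    · rintro ⟨z, y⟩ hp
      simp only [out, mem_coe, mem_sigma, mem_filter, mem_univ, true_and] at hp
      simpa using hbd z z.2 y hp.1 hp.2
    · rintro ⟨⟨z, hz⟩, y⟩ hp ⟨⟨z', hz'⟩, y'⟩ hp' h
      simp only [out, mem_coe, mem_sigma, mem_filter, mem_univ, true_and] at hp hp'
      rcases Sym2.eq_iff.mp h with ⟨rfl, rfl⟩ | ⟨rfl, -⟩
      · rfl
      · exact absurd hz hp'.1
  have hsum : ∑ _z : K, 3 ≤ ∑ z : K, (H.degree z + #(out z)) := sum_le_sum fun z _ => hvert z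
  rw [sum_add_distrib, H.sum_degrees_eq_twice_card_edges, sum_const, card_univ,
    smul_eq_mul] at hsum
  rw [Nat.card_eq_fintype_card, Nat.card_eq_fintype_card, ← edgeFinset_card]
  omega

lemma exists_isCycle [Fintype V] (hK : G.IsCubicPocket K e₁ e₂) :
    ∃ (r : V) (C : G.Walk r r), C.IsCycle ∧ ∀ v ∈ C.support, v ∈ K := by
  have : Nonempty K := hK.1.to_subtype
  have hcyc : ¬ (G.induce K).IsAcyclic := fun h =>
    h.card_edgeSet_lt.not_ge hK.card_le_card_edgeSet_induce
  simp only [IsAcyclic, not_forall, not_not] at hcyc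
  obtain ⟨r, C, hC⟩ := hcyc
  refine ⟨r, C.map (Embedding.induce (G := G) K).toHom, hC.map Subtype.val_injective,
    fun v hv => ?_⟩
  obtain ⟨w, -, rfl⟩ := List.mem_map.mp ((C.support_map _) ▸ hv)
  exact w.2

lemma exists_ssubset_of_isBridge (hK : G.IsCubicPocket K e₁ e₂) {u w : V} (hu : u ∈ K)
    (hw : w ∈ K) (hb : G.IsBridge s(u, w)) :
    ∃ K' ⊂ K, ∃ e₁' e₂', G.IsCubicPocket K' e₁' e₂' := by
  obtain ⟨-, hdeg, hbd⟩ := hK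
  set R := {z | (G.deleteEdges {s(u, w)}).Reachable u z}
  have huR : u ∈ R := Reachable.rfl
  have hwR : w ∉ R := isBridge_iff.mp hb
  have hRadj : ∀ ⦃z y⦄, G.Adj z y → s(z, y) ≠ s(u, w) → (y ∈ R ↔ z ∈ R) := fun z y hzy hne =>
    have hstep : (G.deleteEdges {s(u, w)}).Adj z y := deleteEdges_adj.mpr ⟨hzy, hne⟩
    ⟨fun hy => hy.trans hstep.symm.reachable, fun hz => hz.trans hstep.reachable⟩
  by_cases h₁ : ∃ z ∈ K ∩ R, z ∈ e₁
  · obtain ⟨z₀, ⟨hz₀K, hz₀R⟩, hz₀e⟩ := h₁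
    refine ⟨K \ R, ⟨Set.sdiff_subset, fun h => (h hu).2 huR⟩, s(u, w), e₂,
      ⟨w, hw, hwR⟩, fun z hz => hdeg z hz.1, fun z hz y hy hzy => ?_⟩
    by_cases hf : s(z, y) = s(u, w)
    · exact .inl hf
    have hyK : y ∉ K := fun hyK => hy ⟨hyK, fun hyR => hz.2 ((hRadj hzy hf).mp hyR)⟩
    refine .inr ((hbd z hz.1 y hyK hzy).resolve_left fun he => ?_)
    rcases Sym2.mem_iff.mp (he ▸ hz₀e) with rfl | rfl
    · exact hz.2 hz₀R
    · exact hyK hz₀K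
  · refine ⟨K ∩ R, ⟨Set.inter_subset_left, fun h => hwR (h hw).2⟩, s(u, w), e₂,
      ⟨u, hu, huR⟩, fun z hz => hdeg z hz.1, fun z hz y hy hzy => ?_⟩
    by_cases hf : s(z, y) = s(u, w)
    · exact .inl hf
    have hyK : y ∉ K := fun hyK => hy ⟨hyK, (hRadj hzy hf).mpr hz.2⟩
    refine .inr ((hbd z hz.1 y hyK hzy).resolve_left fun he => ?_)
    exact h₁ ⟨z, hz, he ▸ Sym2.mem_mk_left z y⟩

lemma eq_or_eq_of_adj (hK : G.IsCubicPocket K e₁ e₂) {u u' v v' z y : V} (hu : u ∈ K)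
    (hu' : u' ∉ K) (huu' : G.Adj u u') (hv : v ∈ K) (hv' : v' ∉ K) (hvv' : G.Adj v v')
    (hne : s(u, u') ≠ s(v, v')) (hz : z ∈ K) (hy : y ∉ K) (hzy : G.Adj z y) :
    s(z, y) = s(u, u') ∨ s(z, y) = s(v, v') := by
  obtain ⟨-, -, hbd⟩ := hK
  rcases hbd u hu u' hu' huu' with h₁ | h₁ <;> rcases hbd v hv v' hv' hvv' with h₂ | h₂ <;>
    rcases hbd z hz y hy hzy with h | h <;>
    first
    | exact .inl (h.trans h₁.symm)
    | exact .inr (h.trans h₂.symm)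
    | exact absurd (h₁.trans h₂.symm) hne

lemma exists_ssubset_of_adj (hK : G.IsCubicPocket K e₁ e₂) {u v u' v' : V} (hu : u ∈ K)
    (hv : v ∈ K) (huv : G.Adj u v) (huu' : G.Adj u u') (hvv' : G.Adj v v') (hu' : u' ∉ K)
    (hv' : v' ∉ K) :
    ∃ K' ⊂ K, ∃ e₁' e₂', G.IsCubicPocket K' e₁' e₂' := by
  have hne : s(u, u') ≠ s(v, v') := by
    rw [Ne, Sym2.eq_iff]
    rintro (⟨rfl, -⟩ | ⟨rfl, -⟩)
    · exact huv.ne rfl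
    · exact hv' hu
  have hleave : ∀ z ∈ K, ∀ y ∉ K, G.Adj z y → s(z, y) = s(u, u') ∨ s(z, y) = s(v, v') :=
    fun z hz y hy hzy => hK.eq_or_eq_of_adj hu hu' huu' hv hv' hvv' hne hz hy hzy
  obtain ⟨-, hdeg, -⟩ := hK
  obtain ⟨tu, hutu, htuu', htuv, hu3⟩ :=
    exists_third_neighbor (hdeg u hu) huu' huv (fun h => hu' (h ▸ hv))
  obtain ⟨tv, hvtv, -, htvu, hv3⟩ :=
    exists_third_neighbor (hdeg v hv) hvv' huv.symm (fun h => hv' (h ▸ hu))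
  have htuK : tu ∈ K := by
    by_contra htu
    rcases hleave u hu tu htu hutu with h | h
    · exact htuu' (Sym2.congr_right.mp h)
    · rcases Sym2.eq_iff.mp h with ⟨rfl, -⟩ | ⟨rfl, -⟩
      · exact huv.ne rfl
      · exact hv' hu
  refine ⟨K \ {u, v}, ⟨Set.sdiff_subset, fun h => (h hu).2 (by simp)⟩, s(tu, u), s(tv, v),
    ⟨tu, htuK, by simp [htuv, hutu.ne']⟩, fun z hz => hdeg z hz.1, fun z hz y hy hzy => ?_⟩
  have hyuv : y ∈ K → y = u ∨ y = v := fun hyK => by_contra fun h => hy ⟨hyK, h⟩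
  simp only [Set.mem_sdiff, Set.mem_insert_iff, Set.mem_singleton_iff, not_or] at hz
  by_cases hyK : y ∈ K
  · rcases hyuv hyK with rfl | rfl
    · rcases hu3 z hzy.symm with rfl | rfl | rfl
      · exact absurd hz.1 hu'
      · exact absurd rfl hz.2.2
      · exact .inl rfl
    · rcases hv3 z hzy.symm with rfl | rfl | rfl
      · exact absurd hz.1 hv'
      · exact absurd rfl hz.2.1
      · exact .inr rfl
  · rcases hleave z hz.1 y hyK hzy with h | h <;> rcases Sym2.eq_iff.mp h with ⟨rfl, -⟩ | ⟨rfl, -⟩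
    · exact absurd rfl hz.2.1
    · exact absurd hz.1 hu'
    · exact absurd rfl hz.2.2
    · exact absurd hz.1 hv'

end IsCubicPocket

theorem not_isCubicPocket [Fintype V]
    (hG : ∀ ⦃r : V⦄ (C : G.Walk r r), C.IsCycle → ∃ u ∈ C.support, ∃ v ∈ C.support,
      G.Adj u v ∧ (∃ u', G.Adj u u' ∧ G.IsBridge s(u, u')) ∧
        ∃ v', G.Adj v v' ∧ G.IsBridge s(v, v'))
    (K : Set V) (e₁ e₂ : Sym2 V) : ¬ G.IsCubicPocket K e₁ e₂ := by
  induction K using WellFoundedLT.induction generalizing e₁ e₂ with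
  | _ K ih =>
  intro hK
  obtain ⟨r, C, hC, hCK⟩ := hK.exists_isCycle
  obtain ⟨u, hu, v, hv, huv, ⟨u', huu', hbu⟩, v', hvv', hbv⟩ := hG C hC
  obtain ⟨K', hK'K, e₁', e₂', hK'⟩ : ∃ K' ⊂ K, ∃ e₁' e₂', G.IsCubicPocket K' e₁' e₂' := by
    by_cases hu' : u' ∈ K
    · exact hK.exists_ssubset_of_isBridge (hCK u hu) hu' hbu
    by_cases hv' : v' ∈ K
    · exact hK.exists_ssubset_of_isBridge (hCK v hv) hv' hbv
    exact hK.exists_ssubset_of_adj (hCK u hu) (hCK v hv) huv huu' hvv' hu' hv'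
  exact ih K' hK'K e₁' e₂' hK'

end SimpleGraph

namespace Net

variable {V : Type} {N : Net V} {X A B : Set V} {e e' : Sym2 V}

open SimpleGraph

lemma IsUBPN.subset_verts (hU : N.IsUBPN X) : X ⊆ N.verts := hU.2.2 ▸ fun _ hv => hv.1

lemma mem_verts_of_reachable {H : SimpleGraph V} (hH : H ≤ N.graph) {x z : V}
    (h : H.Reachable x z) (hx : x ∈ N.verts) : z ∈ N.verts := by
  obtain ⟨p⟩ := h.symm
  cases p with
  | nil => exact hx
  | cons hadj _ => exact (N.support (hH hadj)).1

lemma IsCutEdge.exists_adj_isBridge (hN : N.ConnectedOn) {f : Sym2 V} (hf : N.IsCutEdge f)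
    {x : V} (hx : x ∈ f) : ∃ y, N.graph.Adj x y ∧ N.graph.IsBridge s(x, y) := by
  obtain ⟨y, rfl⟩ := Sym2.mem_iff_exists.mp hx
  refine ⟨y, hf.1, fun hxy => hf.2 ⟨hN.1, fun a ha b hb => ?_⟩⟩
  have hside : ∀ c ∈ N.verts, (N.graph.deleteEdges {s(x, y)}).Reachable c x := fun c hc =>
    (hN.2 c hc x (N.support hf.1).1).deleteEdges_or.elim id fun h => h.trans hxy.symm
  exact (hside a ha).trans (hside b hb).symm

lemma QCuttable.exists_adj_of_isCycle (hN : N.ConnectedOn) (h2 : N.QCuttable 2) {r : V}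
    {C : N.graph.Walk r r} (hC : C.IsCycle) :
    ∃ u ∈ C.support, ∃ v ∈ C.support, N.graph.Adj u v ∧
      (∃ u', N.graph.Adj u u' ∧ N.graph.IsBridge s(u, u')) ∧
        ∃ v', N.graph.Adj v v' ∧ N.graph.IsBridge s(v, v') := by
  obtain ⟨x, y, P, -, hlen, hPC, -, hcut⟩ := h2 C hC
  cases P with
  | nil => simp at hlen
  | @cons _ v _ hadj q =>
    have hx : x ∈ (Walk.cons hadj q).support := Walk.start_mem_support _
    have hv : v ∈ (Walk.cons hadj q).support := by simp
    obtain ⟨f, hf, hxf⟩ := hcut _ hx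
    obtain ⟨g, hg, hvg⟩ := hcut _ hv
    exact ⟨x, hPC _ hx, v, hPC _ hv, hadj, hf.exists_adj_isBridge hN hxf,
      hg.exists_adj_isBridge hN hvg⟩

lemma InducesSplit.symm (hs : N.InducesSplit X e A B) : N.InducesSplit X e B A := by
  obtain ⟨hA, hB, hAB, hX, hpath⟩ := hs
  refine ⟨hB, hA, by rwa [Set.inter_comm], by rwa [Set.union_comm], fun x hx y hy P hP => ?_⟩
  simpa using hpath y hy x hx P.reverse hP.reverse

lemma InducesSplit.not_reachable (hs : N.InducesSplit X e A B) {x y : V} (hx : x ∈ A)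
    (hy : y ∈ B) : ¬ (N.graph.deleteEdges {e}).Reachable x y := by
  intro h
  obtain ⟨p, hp⟩ := h.exists_isPath
  have hep := hs.2.2.2.2 x hx y hy _ (hp.mapLe (deleteEdges_le _))
  rw [Walk.edges_mapLe_eq_edges] at hep
  have := p.edges_subset_edgeSet hep
  rw [edgeSet_deleteEdges] at this
  exact this.2 rfl

lemma InducesSplit.reachable_of_mem (hU : N.IsUBPN X) (hs : N.InducesSplit X e A B)
    {x z : V} (hx : x ∈ A) (hz : z ∈ A) : (N.graph.deleteEdges {e}).Reachable x z := by
  obtain ⟨y, hy⟩ := hs.2.1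
  have hv : A ∪ B ⊆ N.verts := hs.2.2.2.1 ▸ hU.subset_verts
  exact reachable_deleteEdges_of_not_reachable (hU.1.2 x (hv (.inl hx)) y (hv (.inr hy)))
    (hU.1.2 x (hv (.inl hx)) z (hv (.inl hz))) (hs.not_reachable hx hy)
    fun h => hs.not_reachable hz hy h.symm

lemma InducesSplit.isCubicPocket_sdiff (hU : N.IsUBPN X) (hs : N.InducesSplit X e A B)
    (hs' : N.InducesSplit X e' A B) {x : V} (hx : x ∈ A)
    (hK : ({z | (N.graph.deleteEdges {e}).Reachable x z} \
      {z | (N.graph.deleteEdges {e'}).Reachable x z}).Nonempty) :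
    N.graph.IsCubicPocket ({z | (N.graph.deleteEdges {e}).Reachable x z} \
      {z | (N.graph.deleteEdges {e'}).Reachable x z}) e e' := by
  refine ⟨hK, fun z hz => ?_, fun z hz y hy hzy => ?_⟩
  · have hzv : z ∈ N.verts :=
      mem_verts_of_reachable (deleteEdges_le _) hz.1 (hU.subset_verts (hs.2.2.2.1 ▸ .inl hx))
    refine (hU.2.1 z hzv).resolve_left fun hz1 => ?_
    have hzX : z ∈ A ∪ B := hs.2.2.2.1 ▸ hU.2.2 ▸ ⟨hzv, hz1⟩
    rcases hzX with hzA | hzB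
    · exact hz.2 (hs'.reachable_of_mem hU hx hzA)
    · exact hs.not_reachable hx hzB hz.1
  · by_cases hyS : (N.graph.deleteEdges {e}).Reachable x y
    · have hyT : (N.graph.deleteEdges {e'}).Reachable x y := by_contra fun h => hy ⟨hyS, h⟩
      exact .inr (Sym2.eq_swap.trans (edge_eq_of_reachable_of_not_reachable hyT hz.2 hzy.symm))
    · exact .inl (edge_eq_of_reachable_of_not_reachable hz.1 hyS hzy)

theorem InducesSplit.unique [Fintype V] (hU : N.IsUBPN X) (h2 : N.QCuttable 2)
    (hs : N.InducesSplit X e A B) (hs' : N.InducesSplit X e' A B) : e = e' := by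
  obtain ⟨x, hx⟩ := hs.1
  obtain ⟨y, hy⟩ := hs.2.1
  have hv : A ∪ B ⊆ N.verts := hs.2.2.2.1 ▸ hU.subset_verts
  have hnoPocket := not_isCubicPocket fun _ C hC => h2.exists_adj_of_isCycle hU.1 hC
  obtain ⟨a, b, hab, rfl, hxa, hxb⟩ := exists_adj_of_not_reachable_deleteEdges
    (hU.1.2 x (hv (.inl hx)) y (hv (.inr hy))) (hs.not_reachable hx hy)
  by_cases ha' : (N.graph.deleteEdges {e'}).Reachable x a
  · by_cases hb' : (N.graph.deleteEdges {e'}).Reachable x b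
    · exact (hnoPocket _ _ _ (hs'.isCubicPocket_sdiff hU hs hx ⟨b, hb', hxb⟩)).elim
    · exact edge_eq_of_reachable_of_not_reachable ha' hb' hab
  · exact (hnoPocket _ _ _ (hs.isCubicPocket_sdiff hU hs' hx ⟨a, hxa, ha'⟩)).elim

end Net

theorem twoCuttable_distinct_cutEdges_distinct_splits_general {V : Type} [Fintype V]
    (U : Net V) (X : Set V) (hU : U.IsUBPN X) (h2 : U.QCuttable 2)
    (e e' : Sym2 V) (hne : e ≠ e')
    (X₁ X₂ Y₁ Y₂ : Set V)
    (hs : U.InducesSplit X e X₁ X₂) (hs' : U.InducesSplit X e' Y₁ Y₂) :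
    ¬ ((X₁ = Y₁ ∧ X₂ = Y₂) ∨ (X₁ = Y₂ ∧ X₂ = Y₁)) := by
  rintro (⟨rfl, rfl⟩ | ⟨rfl, rfl⟩)
  · exact hne (hs.unique hU h2 hs')
  · exact hne (hs.unique hU h2 hs'.symm)

/-- In a `2`-cuttable unrooted binary phylogenetic network on `X`,
distinct cut-edges induce distinct `X`-splits. -/
theorem twoCuttable_distinct_cutEdges_distinct_splits {V : Type} [Fintype V]
    (U : Net V) (X : Set V) (hU : U.IsUBPN X) (h2 : U.QCuttable 2)
    (e e' : Sym2 V) (he : U.IsCutEdge e) (he' : U.IsCutEdge e') (hne : e ≠ e')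
    (X₁ X₂ Y₁ Y₂ : Set V)
    (hs : U.InducesSplit X e X₁ X₂) (hs' : U.InducesSplit X e' Y₁ Y₂) :
    ¬ ((X₁ = Y₁ ∧ X₂ = Y₂) ∨ (X₁ = Y₂ ∧ X₂ = Y₁)) :=
  twoCuttable_distinct_cutEdges_distinct_splits_general U X hU h2 e e' hne X₁ X₂ Y₁ Y₂ hs hs'
end

section
/- Let U be a 2-cuttable unrooted binary phylogenetic network. Then every blob of U has at least three incident cut-edges. -/
namespace Net

variable {V : Type}

/-- Two vertices are in the same blob iff they are joined by a walk avoiding all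
cut-edges (blobs are the nontrivial components obtained after deleting all cut-edges). -/
def SameBlob (N : Net V) (a b : V) : Prop :=
  Relation.ReflTransGen (fun x y => N.graph.Adj x y ∧ ¬ N.IsCutEdge s(x, y)) a b

/-- `v` lies in a blob (a maximal subgraph without cut-edges that is not a single
vertex). -/
def InABlob (N : Net V) (v : V) : Prop := ∃ w, w ≠ v ∧ N.SameBlob v w

end Net

namespace Net

variable {V : Type}

/-- `B` is (the vertex set of) a blob of `N`: an equivalence class of the "same blob"
relation that is not a single vertex. -/
def IsBlob (N : Net V) (B : Set V) : Prop :=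
  (∃ v ∈ N.verts, B = {w | N.SameBlob v w}) ∧ ∃ a ∈ B, ∃ b ∈ B, a ≠ b

end Net

open Net

namespace SimpleGraph

variable {V : Type*} {G : SimpleGraph V}

lemma IsAcyclic.card_edgeFinset_lt [Fintype V] [Nonempty V] [Fintype G.edgeSet]
    (h : G.IsAcyclic) : G.edgeFinset.card < Fintype.card V := by
  classical
  obtain ⟨T, hGT, -, hT⟩ := connected_top.exists_isTree_le_of_le_of_isAcyclic le_top h
  rw [← hT.card_edgeFinset]
  exact Nat.lt_succ_of_le (Finset.card_le_card (edgeFinset_subset_edgeFinset.mpr hGT))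

lemma card_edgeFinset_le_of_forall_isCycle_mem [Fintype V] [Nonempty V] [Fintype G.edgeSet]
    (e : Sym2 V) (h : ∀ ⦃r : V⦄ (C : G.Walk r r), C.IsCycle → e ∈ C.edges) :
    G.edgeFinset.card ≤ Fintype.card V := by
  classical
  have hacyc : (G.deleteEdges {e}).IsAcyclic := fun r C hC => by
    have he := h (C.mapLe (G.deleteEdges_le _)) ((Walk.isCycle_mapLe _).mpr hC)
    rw [Walk.edges_mapLe_eq_edges] at he
    simpa using C.edges_subset_edgeSet he
  calc G.edgeFinset.card ≤ (insert e (G.deleteEdges {e}).edgeFinset).card := by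
        refine Finset.card_le_card fun f hf => ?_
        simp only [Finset.mem_insert, mem_edgeFinset, edgeSet_deleteEdges, Set.mem_sdiff,
          Set.mem_singleton_iff] at hf ⊢
        tauto
    _ ≤ (G.deleteEdges {e}).edgeFinset.card + 1 := Finset.card_insert_le _ _
    _ ≤ Fintype.card V := hacyc.card_edgeFinset_lt

end SimpleGraph

lemma Sym2.exists_forall_eq_of_sum_le_two {ι : Type*} [Fintype ι] [Nonempty ι] (f : ι → ℕ)
    (hf : ∑ i, f i ≤ 2) :
    ∃ e₀ : Sym2 ι, ∀ e : Sym2 ι, ¬ e.IsDiag → (∀ i ∈ e, 0 < f i) → e = e₀ := by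
  classical
  by_cases hpair : ∃ i j, i ≠ j ∧ 0 < f i ∧ 0 < f j
  · obtain ⟨i, j, hij, hi, hj⟩ := hpair
    have hmem : ∀ k, 0 < f k → k = i ∨ k = j := by
      intro k hk
      by_contra! hk'
      have : f i + f j + f k ≤ 2 := by
        calc f i + f j + f k = ∑ l ∈ {k, i, j}, f l := by
              rw [Finset.sum_insert (by simp [hk'.1, hk'.2]), Finset.sum_pair hij]; ring
          _ ≤ ∑ l, f l := Finset.sum_le_sum_of_subset (Finset.subset_univ _)
          _ ≤ 2 := hf
      omega
    refine ⟨s(i, j), fun e hdiag hpos => ?_⟩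
    induction e using Sym2.ind with
    | _ k l =>
      have hkl : k ≠ l := fun h => hdiag (Sym2.mk_isDiag_iff.mpr h)
      rcases hmem k (hpos k (Sym2.mem_mk_left k l)) with rfl | rfl <;>
        rcases hmem l (hpos l (Sym2.mem_mk_right k l)) with rfl | rfl
      all_goals first | exact absurd rfl hkl | rfl | exact Sym2.eq_swap
  · push Not at hpair
    refine ⟨s(Classical.arbitrary ι, Classical.arbitrary ι), fun e hdiag hpos => ?_⟩
    induction e using Sym2.ind with
    | _ k l =>
      have hkl : k ≠ l := fun h => hdiag (Sym2.mk_isDiag_iff.mpr h)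
      exact absurd (hpos l (Sym2.mem_mk_right k l))
        (not_lt.mpr (hpair k l hkl (hpos k (Sym2.mem_mk_left k l))))

namespace Net

open SimpleGraph

variable {V : Type} {N : Net V} {x y : V}

lemma reachable_deleteEdges_of_not_isCutEdge (hxy : N.graph.Adj x y)
    (h : ¬ N.IsCutEdge s(x, y)) : (N.graph.deleteEdges {s(x, y)}).Reachable x y :=
  (not_not.mp fun hconn => h ⟨hxy, hconn⟩ : (N.deleteEdges {s(x, y)}).ConnectedOn).2
    x (N.support hxy).1 y (N.support hxy).2

lemma not_isCutEdge_of_reachable_deleteEdges (hC : N.ConnectedOn)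
    (h : (N.graph.deleteEdges {s(x, y)}).Reachable x y) : ¬ N.IsCutEdge s(x, y) := by
  rintro ⟨-, hdisc⟩
  refine hdisc ⟨hC.1, fun a ha b hb => ?_⟩
  have hdetour : ∀ a b, N.graph.Adj a b → (N.graph.deleteEdges {s(x, y)}).Reachable a b := by
    intro a b hab
    by_cases he : s(a, b) = s(x, y)
    · rcases Sym2.eq_iff.mp he with ⟨rfl, rfl⟩ | ⟨rfl, rfl⟩
      exacts [h, h.symm]
    · exact (deleteEdges_adj.mpr ⟨hab, he⟩).reachable
  simp only [reachable_iff_reflTransGen] at hdetour ⊢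
  exact Relation.reflTransGen_closed hdetour _ _
    ((reachable_iff_reflTransGen a b).mp (hC.2 a ha b hb))

lemma deg_ne_one_of_not_isCutEdge (hxy : N.graph.Adj x y) (h : ¬ N.IsCutEdge s(x, y)) :
    N.deg x ≠ 1 := by
  intro hdeg
  obtain ⟨w, hw⟩ := Set.ncard_eq_one.mp hdeg
  obtain ⟨p⟩ := reachable_deleteEdges_of_not_isCutEdge hxy h
  have hsnd := p.adj_snd (Walk.not_nil_of_ne hxy.ne)
  rw [deleteEdges_adj] at hsnd
  have hy : y ∈ N.graph.neighborSet x := hxy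
  have hz : p.snd ∈ N.graph.neighborSet x := hsnd.1
  rw [hw, Set.mem_singleton_iff] at hy hz
  exact hsnd.2 (by rw [Set.mem_singleton_iff, hz, ← hy])

lemma SameBlob.symm (h : N.SameBlob x y) : N.SameBlob y x := by
  induction h with
  | refl => exact .refl
  | tail _ hstep ih => exact .head ⟨hstep.1.symm, by rw [Sym2.eq_swap]; exact hstep.2⟩ ih

noncomputable def outDeg (N : Net V) (B : Set V) (x : V) : ℕ :=
  (N.graph.neighborSet x \ B).ncard

lemma degree_induce_add_outDeg [Finite V] (B : Set V) (x : B)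
    [Fintype ((N.graph.induce B).neighborSet x)] :
    (N.graph.induce B).degree x + N.outDeg B x = N.deg x := by
  classical
  have hdeg : (N.graph.induce B).degree x = (N.graph.neighborSet x ∩ B).ncard := by
    rw [← card_neighborSet_eq_degree, ← Nat.card_eq_fintype_card,
      Nat.card_coe_set_eq, neighborSet_induce,
      ← Set.ncard_image_of_injective _ Subtype.val_injective, Subtype.image_preimage_coe,
      Set.inter_comm]
  rw [hdeg, outDeg, deg, Set.ncard_inter_add_ncard_sdiff_eq_ncard _ _ (Set.toFinite _)]

lemma QCuttable.exists_mem_edges (h2 : N.QCuttable 2) {r : V} (C : N.graph.Walk r r)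
    (hc : C.IsCycle) : ∃ e ∈ C.edges, ∀ v ∈ e, ∃ f, N.IsCutEdge f ∧ v ∈ f := by
  obtain ⟨x, y, P, -, hlen, -, hedges, hcut⟩ := h2 C hc
  obtain ⟨e, he⟩ : ∃ e, e ∈ P.edges := by
    refine List.exists_mem_of_ne_nil _ fun hnil => ?_
    have hedges := P.length_edges
    rw [hnil, List.length_nil] at hedges
    rw [Walk.length_support] at hlen
    omega
  exact ⟨e, hedges e he, fun v hv => hcut v (P.mem_support_of_mem_edges he hv)⟩

namespace IsBlob

variable {B : Set V}

lemma mem_iff (hB : N.IsBlob B) (hx : x ∈ B) : y ∈ B ↔ N.SameBlob x y := by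
  obtain ⟨⟨v, -, rfl⟩, -⟩ := hB
  exact ⟨fun hy => hx.symm.trans hy, fun hxy => Relation.ReflTransGen.trans hx hxy⟩

lemma mem_of_adj (hB : N.IsBlob B) (hx : x ∈ B) (hxy : N.graph.Adj x y)
    (h : ¬ N.IsCutEdge s(x, y)) : y ∈ B :=
  (hB.mem_iff hx).mpr (.single ⟨hxy, h⟩)

lemma not_isCutEdge (hC : N.ConnectedOn) (hB : N.IsBlob B) (hx : x ∈ B) (hy : y ∈ B) :
    ¬ N.IsCutEdge s(x, y) := by
  intro hcut
  refine not_isCutEdge_of_reachable_deleteEdges hC ?_ hcut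
  rw [reachable_iff_reflTransGen]
  refine Relation.ReflTransGen.mono (fun a b hab => ?_) _ _ ((hB.mem_iff hx).mp hy)
  exact deleteEdges_adj.mpr
    ⟨hab.1, fun he => hab.2 (Set.mem_singleton_iff.mp he ▸ hcut)⟩

lemma exists_adj_not_isCutEdge (hB : N.IsBlob B) (hx : x ∈ B) :
    ∃ y, N.graph.Adj x y ∧ ¬ N.IsCutEdge s(x, y) := by
  obtain ⟨w, hw, hwx⟩ : ∃ w ∈ B, w ≠ x := by
    obtain ⟨-, a, ha, b, hb, hab⟩ := hB
    by_cases hax : a = x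
    · exact ⟨b, hb, hax ▸ hab.symm⟩
    · exact ⟨a, ha, hax⟩
  rcases ((hB.mem_iff hx).mp hw).cases_head with h | ⟨y, hxy, -⟩
  · exact absurd h.symm hwx
  · exact ⟨y, hxy⟩

lemma deg_eq_three {X : Set V} (hU : N.IsUBPN X) (hB : N.IsBlob B) (hx : x ∈ B) :
    N.deg x = 3 := by
  obtain ⟨y, hxy, hnc⟩ := hB.exists_adj_not_isCutEdge hx
  exact (hU.2.1 x (N.support hxy).1).resolve_left (deg_ne_one_of_not_isCutEdge hxy hnc)

lemma outDeg_pos [Finite V] (hC : N.ConnectedOn) (hB : N.IsBlob B) (hx : x ∈ B) {e : Sym2 V}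
    (he : N.IsCutEdge e) (hxe : x ∈ e) : 0 < N.outDeg B x := by
  obtain ⟨y, rfl⟩ := Sym2.mem_iff_exists.mp hxe
  refine Set.ncard_pos (Set.toFinite _) |>.mpr ⟨y, he.1, fun hy => ?_⟩
  exact hB.not_isCutEdge hC hx hy he

lemma sum_outDeg_le [Finite V] [Fintype B] (hB : N.IsBlob B) :
    ∑ x : B, N.outDeg B x ≤ {e : Sym2 V | N.IsCutEdge e ∧ ∃ v ∈ B, v ∈ e}.ncard := by
  classical
  have := Fintype.ofFinite V
  simp only [outDeg, Set.ncard_eq_toFinset_card']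
  rw [← Finset.card_sigma]
  refine Finset.card_le_card_of_injOn (fun p => s((p.1 : V), p.2)) (fun p hp => ?_) ?_
  · rw [Finset.mem_coe, Finset.mem_sigma, Set.mem_toFinset, Set.mem_sdiff] at hp
    rw [Finset.mem_coe, Set.mem_toFinset]
    exact ⟨by_contra fun h => hp.2.2 (hB.mem_of_adj p.1.2 hp.2.1 h), p.1, p.1.2,
      Sym2.mem_mk_left _ _⟩
  · rintro ⟨⟨a, ha⟩, b⟩ - ⟨⟨c, hc⟩, d⟩ hcd h
    rw [Finset.mem_coe, Finset.mem_sigma, Set.mem_toFinset, Set.mem_sdiff] at hcd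
    rcases Sym2.eq_iff.mp h with ⟨rfl, rfl⟩ | ⟨rfl, rfl⟩
    · rfl
    · exact absurd ha hcd.2.2

lemma two_mul_card_edgeFinset_add_sum_outDeg [Finite V] [Fintype B]
    [DecidableRel (N.graph.induce B).Adj] {X : Set V} (hU : N.IsUBPN X) (hB : N.IsBlob B) :
    2 * (N.graph.induce B).edgeFinset.card + ∑ x : B, N.outDeg B x = 3 * Fintype.card B := by
  rw [← sum_degrees_eq_twice_card_edges, ← Finset.sum_add_distrib]
  simp only [degree_induce_add_outDeg, hB.deg_eq_three hU (Subtype.prop _), Finset.sum_const,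
    Finset.card_univ, smul_eq_mul, mul_comm]

lemma exists_mem_edges_outDeg_pos [Finite V] (hC : N.ConnectedOn) (hB : N.IsBlob B)
    (h2 : N.QCuttable 2) {r : B} (C : (N.graph.induce B).Walk r r) (hc : C.IsCycle) :
    ∃ e ∈ C.edges, ∀ x ∈ e, 0 < N.outDeg B x := by
  let f := (Embedding.induce (G := N.graph) B).toHom
  obtain ⟨e', he', hcut⟩ := h2.exists_mem_edges (C.map f) (hc.map Subtype.val_injective)
  rw [Walk.edges_map, List.mem_map] at he'
  obtain ⟨e, he, rfl⟩ := he'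
  refine ⟨e, he, fun x hx => ?_⟩
  obtain ⟨g, hg, hxg⟩ := hcut x (Sym2.mem_map.mpr ⟨x, hx, rfl⟩)
  exact hB.outDeg_pos hC x.2 hg hxg

end IsBlob

end Net

/-- Every blob of a `2`-cuttable unrooted binary phylogenetic network
has at least three incident cut-edges. -/
theorem twoCuttable_blob_three_cutEdges {V : Type} [Fintype V]
    (U : Net V) (X : Set V) (hU : U.IsUBPN X) (h2 : U.QCuttable 2)
    (B : Set V) (hB : U.IsBlob B) :
    3 ≤ {e : Sym2 V | U.IsCutEdge e ∧ ∃ v ∈ B, v ∈ e}.ncard := by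
  classical
  by_contra! hlt
  have hsum : ∑ x : B, U.outDeg B x ≤ 2 := by have := hB.sum_outDeg_le; omega
  have hcard : 2 ≤ Fintype.card B := by
    obtain ⟨-, a, ha, b, hb, hab⟩ := hB
    exact Fintype.one_lt_card_iff.mpr
      ⟨⟨a, ha⟩, ⟨b, hb⟩, fun h => hab (congrArg Subtype.val h)⟩
  have : Nonempty B := Fintype.card_pos_iff.mp (by omega)
  obtain ⟨e₀, he₀⟩ := Sym2.exists_forall_eq_of_sum_le_two _ hsum
  have hE : (U.graph.induce B).edgeFinset.card ≤ Fintype.card B := by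
    refine SimpleGraph.card_edgeFinset_le_of_forall_isCycle_mem e₀ fun r C hC => ?_
    obtain ⟨e, he, hpos⟩ := hB.exists_mem_edges_outDeg_pos hU.1 h2 C hC
    rwa [← he₀ e (SimpleGraph.not_isDiag_of_mem_edgeSet _ (C.edges_subset_edgeSet he)) hpos]
  have hcount := hB.two_mul_card_edgeFinset_add_sum_outDeg hU
  have hchoose := (U.graph.induce B).card_edgeFinset_le_card_choose_two
  have hB2 : Fintype.card B = 2 := by omega
  rw [hB2, Nat.choose_self] at hchoose
  omega
end
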